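/- arXiv:2411.11793 — 6 statements merged into one kernel-verified Lean document; each statement's English description precedes it below -/
import Mathlib

section
/- The FL game Γ_FL is a weighted potential game: with P_FL(s) = Σ_{i=1}^m Σ_{t=1}^T (λ ρ_i²/2 − α_i ρ_i)(s_i^t)² + Σ_{t=1}^T (λ/2)(Σ_{i=1}^m ρ_i s_i^t)², for every strategy profile s, every client i, and every alternative strategy x_i ∈ ℝ_+^T, one has P_i(s_i, s_{−i}) − P_i(x_i, s_{−i}) = (1/ρ_i) · (P_FL(s_i, s_{−i}) − P_FL(x_i, s_{−i})). -/
open Finset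

/-- Payoff of client `i` in the FL game `Γ_FL`. -/
noncomputable def payFL (m T : ℕ) (lam : ℝ) (ρ α : Fin m → ℝ)
    (s : Fin m → Fin T → ℝ) (i : Fin m) : ℝ :=
  ∑ t, (lam * (∑ j, ρ j * s j t) * s i t - α i * (s i t) ^ 2)

/-- The candidate potential function `P_FL`. -/
noncomputable def potFL (m T : ℕ) (lam : ℝ) (ρ α : Fin m → ℝ)
    (s : Fin m → Fin T → ℝ) : ℝ :=
  (∑ i, ∑ t, (lam * (ρ i) ^ 2 / 2 - α i * ρ i) * (s i t) ^ 2)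
    + ∑ t, lam / 2 * (∑ i, ρ i * s i t) ^ 2

/-- `Γ_FL` is a weighted potential game with potential `P_FL`
and weights `w_i = 1 / ρ_i`. -/
theorem FL_is_weighted_potential_game
    (m T : ℕ) (hm : 1 ≤ m) (hT : 1 ≤ T)
    (ρ α : Fin m → ℝ) (hρ : ∀ i, 0 < ρ i) (hρsum : ∑ i, ρ i = 1)
    (hα : ∀ i, 0 < α i) (lam : ℝ) (hlam : 0 < lam)
    (s : Fin m → Fin T → ℝ) (hs : ∀ i t, 0 ≤ s i t)
    (i : Fin m) (x : Fin T → ℝ) (hx : ∀ t, 0 ≤ x t) :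
    payFL m T lam ρ α s i - payFL m T lam ρ α (Function.update s i x) i
      = (1 / ρ i) *
        (potFL m T lam ρ α s - potFL m T lam ρ α (Function.update s i x)) := by
  classical
  have hρi : ρ i ≠ 0 := (hρ i).ne'
  set u := Function.update s i x with hu
  have hui : ∀ t, u i t = x t := fun t => by simp [hu]
  have huj : ∀ j, j ≠ i → u j = s j := fun j hj => by
    simp [hu, Function.update_of_ne hj]
  -- split the weighted sum at i
  have hS : ∀ (y : Fin m → Fin T → ℝ) (t : Fin T),
      (∑ j, ρ j * y j t) = ρ i * y i t + ∑ j ∈ univ.erase i, ρ j * y j t := by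
    intro y t
    exact (Finset.add_sum_erase _ _ (mem_univ i)).symm
  have hA : ∀ t, (∑ j ∈ univ.erase i, ρ j * u j t)
      = ∑ j ∈ univ.erase i, ρ j * s j t := by
    intro t
    refine Finset.sum_congr rfl fun j hj => ?_
    rw [huj j (Finset.mem_erase.mp hj).1]
  -- split the first part of the potential at i
  have hP : ∀ (y : Fin m → Fin T → ℝ),
      (∑ i', ∑ t, (lam * (ρ i') ^ 2 / 2 - α i' * ρ i') * (y i' t) ^ 2)
        = (∑ t, (lam * (ρ i) ^ 2 / 2 - α i * ρ i) * (y i t) ^ 2)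
          + ∑ i' ∈ univ.erase i, ∑ t,
              (lam * (ρ i') ^ 2 / 2 - α i' * ρ i') * (y i' t) ^ 2 := by
    intro y
    exact (Finset.add_sum_erase _ _ (mem_univ i)).symm
  have hPrest : (∑ i' ∈ univ.erase i, ∑ t,
        (lam * (ρ i') ^ 2 / 2 - α i' * ρ i') * (u i' t) ^ 2)
      = ∑ i' ∈ univ.erase i, ∑ t,
        (lam * (ρ i') ^ 2 / 2 - α i' * ρ i') * (s i' t) ^ 2 := by
    refine Finset.sum_congr rfl fun j hj => ?_
    rw [huj j (Finset.mem_erase.mp hj).1]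
  unfold payFL potFL
  rw [hP s, hP u, hPrest]
  simp only [hui]
  have hrw : ∀ t, (∑ j, ρ j * s j t)
      = ρ i * s i t + ∑ j ∈ univ.erase i, ρ j * s j t := fun t => hS s t
  have hrw' : ∀ t, (∑ j, ρ j * u j t)
      = ρ i * x t + ∑ j ∈ univ.erase i, ρ j * s j t := by
    intro t
    rw [hS u t, hui, hA]
  simp only [hrw, hrw']
  rw [← Finset.sum_sub_distrib]
  -- collect everything into a single sum over t on both sides
  have : ∀ t : Fin T,
      ((lam * (ρ i * s i t + ∑ j ∈ univ.erase i, ρ j * s j t) * s i t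
          - α i * s i t ^ 2)
        - (lam * (ρ i * x t + ∑ j ∈ univ.erase i, ρ j * s j t) * x t
          - α i * x t ^ 2))
      = (1 / ρ i) *
        (((lam * (ρ i) ^ 2 / 2 - α i * ρ i) * (s i t) ^ 2
            - (lam * (ρ i) ^ 2 / 2 - α i * ρ i) * (x t) ^ 2)
          + (lam / 2 * (ρ i * s i t + ∑ j ∈ univ.erase i, ρ j * s j t) ^ 2
            - lam / 2 * (ρ i * x t + ∑ j ∈ univ.erase i, ρ j * s j t) ^ 2)) := by
    intro t
    field_simp
    ring
  calc ∑ t, ((lam * (ρ i * s i t + ∑ j ∈ univ.erase i, ρ j * s j t) * s i t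
          - α i * s i t ^ 2)
        - (lam * (ρ i * x t + ∑ j ∈ univ.erase i, ρ j * s j t) * x t
          - α i * x t ^ 2))
      = ∑ t, (1 / ρ i) *
        (((lam * (ρ i) ^ 2 / 2 - α i * ρ i) * (s i t) ^ 2
            - (lam * (ρ i) ^ 2 / 2 - α i * ρ i) * (x t) ^ 2)
          + (lam / 2 * (ρ i * s i t + ∑ j ∈ univ.erase i, ρ j * s j t) ^ 2
            - lam / 2 * (ρ i * x t + ∑ j ∈ univ.erase i, ρ j * s j t) ^ 2)) :=
        Finset.sum_congr rfl fun t _ => this t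
    _ = _ := by
        rw [← Finset.mul_sum]
        congr 1
        rw [Finset.sum_add_distrib, Finset.sum_sub_distrib, Finset.sum_sub_distrib]
        ring
end

section
/- If λ > 0 and λ ≠ λ*, then the homogeneous FL game Γ_FL^h has a unique Nash equilibrium: any two Nash equilibria of Γ_FL^h coincide, and at least one Nash equilibrium exists. -/
open Finset

/-- Payoff of client `i` in the homogeneous FL game `Γ_FL^h`. -/
noncomputable def payH (m : ℕ) (lam : ℝ) (α : Fin m → ℝ) (s : Fin m → ℝ) (i : Fin m) : ℝ :=
  lam / (m : ℝ) * (∑ j, s j) * s i - α i * (s i) ^ 2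

/-- Nash equilibrium of the homogeneous FL game `Γ_FL^h`. -/
def isNE (m : ℕ) (lam : ℝ) (α q Q : Fin m → ℝ) (s : Fin m → ℝ) : Prop :=
  (∀ i, s i ∈ Set.Icc (q i) (Q i)) ∧
  ∀ i : Fin m, ∀ x ∈ Set.Icc (q i) (Q i),
    payH m lam α (Function.update s i x) i ≤ payH m lam α s i

lemma clamp_mem {qi Qi x : ℝ} (h : qi ≤ Qi) : max qi (min Qi x) ∈ Set.Icc qi Qi :=
  ⟨le_max_left _ _, max_le h (min_le_left _ _)⟩

lemma clamp_lip {qi Qi x y : ℝ} (h : x ≤ y) :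
    max qi (min Qi y) - max qi (min Qi x) ≤ y - x := by
  simp only [min_def, max_def]; split_ifs <;> linarith

lemma clamp_mono {qi Qi x y : ℝ} (h : x ≤ y) :
    max qi (min Qi x) ≤ max qi (min Qi y) := by
  simp only [min_def, max_def]; split_ifs <;> linarith

lemma clamp_lt_top {qi Qi u v : ℝ} (hv : v = max qi (min Qi u)) (hlt : v < Qi) : u ≤ v := by
  rcases le_total Qi u with h | h
  · exfalso
    rw [hv, min_eq_left h] at hlt
    exact absurd hlt (not_lt.2 (le_max_right _ _))
  · rw [hv, min_eq_right h]; exact le_max_right _ _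

lemma concave_opt (M lam αi qi Qi B si : ℝ) (hM : 0 < M) (hlam : 0 < lam)
    (hconc : lam < M * αi) (hq : 0 < qi) (hqQ : qi ≤ Qi)
    (hsi : si ∈ Set.Icc qi Qi) :
    (∀ x ∈ Set.Icc qi Qi, lam/M*(B+x)*x - αi*x^2 ≤ lam/M*(B+si)*si - αi*si^2)
    ↔ si = max qi (min Qi (lam*(B+si)/(2*M*αi - lam))) := by
  have hM' : (M:ℝ) ≠ 0 := ne_of_gt hM
  have hαi : 0 < αi := by nlinarith
  set D : ℝ := 2*M*αi - lam with hDdef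
  have hD : 0 < D := by rw [hDdef]; nlinarith
  set u : ℝ := lam*(B+si)/D with hudef
  have hu : u * D = lam * (B + si) := div_mul_cancel₀ _ (ne_of_gt hD)
  have hDM : D = 2*M*αi - lam := hDdef
  clear_value D
  clear_value u
  have ha : lam/M - αi < 0 := by
    have : lam/M < αi := (div_lt_iff₀ hM).2 (by linarith)
    linarith
  have hc : 0 < D/M := div_pos hD hM
  have hca : D/M + (lam/M - αi) = αi := by rw [hDM]; field_simp; ring
  have key : ∀ x : ℝ, (lam/M*(B+x)*x - αi*x^2) - (lam/M*(B+si)*si - αi*si^2)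
      = (x - si) * (D/M*(u - si) + (lam/M - αi)*(x - si)) := by
    intro x
    have h9 : lam * B = u * (2*M*αi - lam) - lam * si := by
      rw [← hDM]; linarith [hu]
    rw [hDM]
    field_simp
    linear_combination (x - si) * h9
  constructor
  · intro hopt
    have hQ1 : si < u → si = Qi := by
      intro hlt
      by_contra hne
      have hsQ : si < Qi := lt_of_le_of_ne hsi.2 hne
      have hxs : si < min Qi u := lt_min hsQ hlt
      have hxu : min Qi u ≤ u := min_le_right _ _
      have hle := hopt (min Qi u) ⟨le_trans hsi.1 hxs.le, min_le_left _ _⟩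
      have hk := key (min Qi u)
      have hbr : D/M*(u - si) + (lam/M - αi)*(min Qi u - si) ≤ 0 := by
        by_contra hcb
        push_neg at hcb
        nlinarith [mul_pos (sub_pos.2 hxs) hcb]
      have h5 : (lam/M - αi)*(u - si) ≤ (lam/M - αi)*(min Qi u - si) :=
        mul_le_mul_of_nonpos_left (by linarith) ha.le
      nlinarith [mul_pos hαi (sub_pos.2 hlt)]
    have hq1 : u < si → si = qi := by
      intro hlt
      by_contra hne
      have hsq : qi < si := lt_of_le_of_ne hsi.1 (Ne.symm hne)
      have hxs : max qi u < si := max_lt hsq hlt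
      have hxu : u ≤ max qi u := le_max_right _ _
      have hle := hopt (max qi u) ⟨le_max_left _ _, le_trans hxs.le hsi.2⟩
      have hk := key (max qi u)
      have hbr : 0 ≤ D/M*(u - si) + (lam/M - αi)*(max qi u - si) := by
        by_contra hcb
        push_neg at hcb
        nlinarith [mul_pos (sub_pos.2 hxs) (neg_pos.2 hcb)]
      have h5 : (lam/M - αi)*(max qi u - si) ≤ (lam/M - αi)*(u - si) :=
        mul_le_mul_of_nonpos_left (by linarith) ha.le
      nlinarith [mul_pos hαi (sub_pos.2 hlt)]
    rcases lt_trichotomy si u with h | h | h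
    · have hQ := hQ1 h
      rw [hQ] at h ⊢
      rw [min_eq_left h.le, max_eq_right hqQ]
    · rw [← h, min_eq_right hsi.2, max_eq_right hsi.1]
    · have hq' := hq1 h
      rw [hq'] at h ⊢
      rw [min_eq_right (le_trans h.le hqQ), max_eq_left h.le]
  · intro hv x hx
    have hprod : (x - si) * (u - si) ≤ 0 := by
      rcases lt_trichotomy si u with h | h | h
      · rcases min_cases Qi u with ⟨he, h2⟩ | ⟨he, h2⟩
        · have hsQ : si = Qi := by rw [hv, he, max_eq_right hqQ]
          exact mul_nonpos_of_nonpos_of_nonneg (by linarith [hx.2]) (by linarith)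
        · exfalso
          have : u ≤ si := by rw [hv, he]; exact le_max_right _ _
          linarith
      · rw [← h]; simp
      · have h1 : min Qi u ≤ u := min_le_right _ _
        rcases max_cases qi (min Qi u) with ⟨he, _⟩ | ⟨he, _⟩
        · have hsq : si = qi := by rw [hv, he]
          exact mul_nonpos_of_nonneg_of_nonpos (by linarith [hx.1]) (by linarith)
        · exfalso
          have : si ≤ u := by rw [hv]; rw [he]; exact h1
          linarith
    have h6 : D/M*((x - si)*(u - si)) ≤ 0 := mul_nonpos_of_nonneg_of_nonpos hc.le hprod
    have h7 : (lam/M - αi)*(x - si)^2 ≤ 0 :=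
      mul_nonpos_of_nonpos_of_nonneg ha.le (sq_nonneg _)
    have hk' : (lam/M*(B+x)*x - αi*x^2) - (lam/M*(B+si)*si - αi*si^2)
        = D/M*((x - si)*(u - si)) + (lam/M - αi)*(x - si)^2 := by
      rw [key x]; ring
    linarith [hk', h6, h7]

lemma convex_opt (M lam αi qi Qi B si : ℝ) (hM : 0 < M) (hlam : 0 < lam)
    (hconv : M * αi ≤ lam) (hq : 0 < qi) (hqQ : qi ≤ Qi) (hB : 0 < B)
    (hsi : si ∈ Set.Icc qi Qi) :
    (∀ x ∈ Set.Icc qi Qi, lam/M*(B+x)*x - αi*x^2 ≤ lam/M*(B+si)*si - αi*si^2)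
    ↔ si = Qi := by
  have hM' : (M:ℝ) ≠ 0 := ne_of_gt hM
  have ha : αi ≤ lam/M := (le_div_iff₀ hM).2 (by linarith)
  have hBM : 0 < lam/M * B := mul_pos (div_pos hlam hM) hB
  constructor
  · intro hopt
    refine le_antisymm hsi.2 ?_
    by_contra hcb
    push_neg at hcb
    have hle := hopt Qi ⟨hqQ, le_refl _⟩
    nlinarith [mul_pos (sub_pos.2 hcb) hBM, hsi.1,
      mul_nonneg (sub_pos.2 hcb).le (mul_nonneg (sub_nonneg.2 ha)
        (by linarith [hsi.1] : (0:ℝ) ≤ Qi + si))]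
  · rintro rfl x hx
    nlinarith [mul_nonneg (sub_nonneg.2 hx.2) hBM.le,
      mul_nonneg (sub_nonneg.2 hx.2) (mul_nonneg (sub_nonneg.2 ha)
        (by linarith [hx.1] : (0:ℝ) ≤ si + x))]

lemma payH_update (m : ℕ) (lam : ℝ) (α : Fin m → ℝ) (s : Fin m → ℝ) (i : Fin m) (x : ℝ) :
    payH m lam α (Function.update s i x) i
      = lam/(m:ℝ)*(((∑ j, s j) - s i) + x)*x - α i * x^2 := by
  have hsum : ∑ j, Function.update s i x j = x + ((∑ j, s j) - s i) := by
    rw [Finset.sum_update_of_mem (Finset.mem_univ i),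
      Finset.sum_sdiff_eq_sub (Finset.subset_univ {i}), Finset.sum_singleton]
  simp only [payH, hsum, Function.update_self]
  ring

lemma payH_self (m : ℕ) (lam : ℝ) (α : Fin m → ℝ) (s : Fin m → ℝ) (i : Fin m) :
    payH m lam α s i
      = lam/(m:ℝ)*(((∑ j, s j) - s i) + s i)*(s i) - α i * (s i)^2 := by
  simp only [payH]; ring

set_option maxHeartbeats 1000000 in
/-- If `λ > 0` and `λ ≠ λ*`, the homogeneous FL game has a
unique Nash equilibrium. -/
theorem homFL_unique_NE
    (m : ℕ) (hm : 1 ≤ m) (α q Q : Fin m → ℝ)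
    (hα : ∀ i, 0 < α i) (hq : ∀ i, 0 < q i) (hqQ : ∀ i, q i ≤ Q i)
    (αmin : ℝ) (hαmin : IsLeast (Set.range α) αmin)
    (lamstar : ℝ) (hlamstar : lamstar ∈ Set.Ioo 0 ((m : ℝ) * αmin))
    (hlseq : ∑ i, lamstar / (2 * (m : ℝ) * α i - lamstar) = 1)
    (lam : ℝ) (hlam : 0 < lam) (hne : lam ≠ lamstar) :
    ∃! s : Fin m → ℝ, isNE m lam α q Q s := by
  -- the case m = 1 is impossible: the hypotheses are contradictory
  rcases eq_or_lt_of_le hm with h1 | hm2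
  · exfalso
    subst h1
    rw [Fin.sum_univ_one] at hlseq
    have hα0 : αmin ≤ α 0 := hαmin.2 ⟨0, rfl⟩
    have hls : lamstar < α 0 := by
      have := hlamstar.2
      push_cast at this
      linarith
    have hd : (0:ℝ) < 2 * (1:ℕ) * α 0 - lamstar := by
      push_cast
      linarith [hlamstar.1]
    have := (div_eq_one_iff_eq (ne_of_gt hd)).1 hlseq
    push_cast at this
    linarith
  -- now 2 ≤ m
  have hM0 : (0:ℝ) < (m:ℝ) := by positivity
  have hmlt : 1 < m := hm2
  haveI : Nonempty (Fin m) := ⟨⟨0, by omega⟩⟩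
  have hαminle : ∀ i, αmin ≤ α i := fun i => hαmin.2 ⟨i, rfl⟩
  -- best-response map
  set r : Fin m → ℝ → ℝ := fun i S =>
    if lam < (m:ℝ) * α i then max (q i) (min (Q i) (lam*S/(2*(m:ℝ)*α i - lam))) else Q i
    with hrdef
  have hrange : ∀ i S, r i S ∈ Set.Icc (q i) (Q i) := by
    intro i S
    simp only [hrdef]
    split_ifs
    · exact clamp_mem (hqQ i)
    · exact ⟨hqQ i, le_refl _⟩
  -- positivity of opponents' total
  have hBpos : ∀ (s : Fin m → ℝ), (∀ i, s i ∈ Set.Icc (q i) (Q i)) → ∀ i,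
      0 < (∑ j, s j) - s i := by
    intro s hbox i
    have h1 : (∑ j, s j) - s i = ∑ j ∈ univ.erase i, s j :=
      (Finset.sum_erase_eq_sub (mem_univ i)).symm
    rw [h1]
    apply Finset.sum_pos
    · exact fun j _ => lt_of_lt_of_le (hq j) (hbox j).1
    · obtain ⟨j, hj⟩ := Fintype.exists_ne_of_one_lt_card (by simpa using hmlt) i
      exact ⟨j, Finset.mem_erase.2 ⟨hj, mem_univ j⟩⟩
  -- characterization of NE as fixed point of r
  have hopt_iff : ∀ (s : Fin m → ℝ), (∀ i, s i ∈ Set.Icc (q i) (Q i)) → ∀ i,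
      ((∀ x ∈ Set.Icc (q i) (Q i),
        payH m lam α (Function.update s i x) i ≤ payH m lam α s i)
      ↔ s i = r i (∑ j, s j)) := by
    intro s hbox i
    have hB := hBpos s hbox i
    have hiff1 : (∀ x ∈ Set.Icc (q i) (Q i),
        payH m lam α (Function.update s i x) i ≤ payH m lam α s i)
        ↔ (∀ x ∈ Set.Icc (q i) (Q i),
          lam/(m:ℝ)*(((∑ j, s j) - s i)+x)*x - α i*x^2
            ≤ lam/(m:ℝ)*(((∑ j, s j) - s i)+ s i)*(s i) - α i*(s i)^2) := by
      apply forall₂_congr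
      intro x hx
      rw [payH_update, payH_self]
    rw [hiff1]
    by_cases hAi : lam < (m:ℝ) * α i
    · rw [concave_opt (m:ℝ) lam (α i) (q i) (Q i) ((∑ j, s j) - s i) (s i)
        hM0 hlam hAi (hq i) (hqQ i) (hbox i)]
      rw [show ((∑ j, s j) - s i) + s i = ∑ j, s j by ring]
      simp only [hrdef, if_pos hAi]
    · push_neg at hAi
      rw [convex_opt (m:ℝ) lam (α i) (q i) (Q i) ((∑ j, s j) - s i) (s i)
        hM0 hlam hAi (hq i) (hqQ i) hB (hbox i)]
      simp only [hrdef, if_neg (not_lt.2 hAi)]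
  have hNEiff : ∀ s : Fin m → ℝ, isNE m lam α q Q s ↔ ∀ i, s i = r i (∑ j, s j) := by
    intro s
    constructor
    · intro h i
      exact (hopt_iff s h.1 i).1 (h.2 i)
    · intro h
      have hbox : ∀ i, s i ∈ Set.Icc (q i) (Q i) := by
        intro i; rw [h i]; exact hrange i _
      exact ⟨hbox, fun i => (hopt_iff s hbox i).2 (h i)⟩
  -- existence via intermediate value theorem
  set F : ℝ → ℝ := fun S => ∑ i, r i S with hFdef
  have hFcont : Continuous F := by
    apply continuous_finset_sum
    intro i _
    simp only [hrdef]
    split_ifs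
    · exact continuous_const.max (continuous_const.min
        ((continuous_const.mul continuous_id).div_const _))
    · exact continuous_const
  have hSqSQ : (∑ i, q i) ≤ ∑ i, Q i := Finset.sum_le_sum fun i _ => hqQ i
  have hg1 : F (∑ i, Q i) - (∑ i, Q i) ≤ 0 := by
    have : F (∑ i, Q i) ≤ ∑ i, Q i := Finset.sum_le_sum fun i _ => (hrange i _).2
    linarith
  have hg2 : 0 ≤ F (∑ i, q i) - (∑ i, q i) := by
    have : (∑ i, q i) ≤ F (∑ i, q i) := Finset.sum_le_sum fun i _ => (hrange i _).1
    linarith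
  obtain ⟨S₀, hS₀mem, hFS₀⟩ := intermediate_value_Icc' hSqSQ
    ((hFcont.sub continuous_id).continuousOn) (Set.mem_Icc.2 ⟨hg1, hg2⟩)
  have hfix : F S₀ = S₀ := by
    have : F S₀ - S₀ = 0 := hFS₀
    linarith
  set s₀ : Fin m → ℝ := fun i => r i S₀ with hs₀def
  have hsum0 : (∑ j, s₀ j) = S₀ := hfix
  have hs₀NE : isNE m lam α q Q s₀ := by
    rw [hNEiff]
    intro i
    rw [hsum0]
  -- uniqueness
  have hlt_false : ∀ s t : Fin m → ℝ, (∀ i, s i = r i (∑ j, s j)) →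
      (∀ i, t i = r i (∑ j, t j)) → (∑ j, s j) < (∑ j, t j) → False := by
    intro s t hs ht hST
    set S : ℝ := ∑ j, s j with hSdef
    set T : ℝ := ∑ j, t j with hTdef
    have hboxs : ∀ i, s i ∈ Set.Icc (q i) (Q i) := fun i => (hs i) ▸ hrange i S
    have hboxt : ∀ i, t i ∈ Set.Icc (q i) (Q i) := fun i => (ht i) ▸ hrange i T
    have hS0 : 0 < S := by
      rw [hSdef]
      exact Finset.sum_pos (fun i _ => lt_of_lt_of_le (hq i) (hboxs i).1) univ_nonempty
    have hDpos : ∀ i, lam < (m:ℝ) * α i → 0 < 2*(m:ℝ)*α i - lam := by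
      intro i h; nlinarith [hα i]
    have hmono : ∀ i, s i ≤ t i := by
      intro i
      rw [hs i, ht i]
      simp only [hrdef]
      split_ifs with h
      · exact clamp_mono ((div_le_div_iff_of_pos_right (hDpos i h)).2
          (mul_le_mul_of_nonneg_left hST.le hlam.le))
      · exact le_refl _
    set P : Finset (Fin m) := univ.filter (fun i => s i < t i) with hPdef
    have hAi : ∀ i ∈ P, lam < (m:ℝ) * α i := by
      intro i hi
      have hi' : s i < t i := (Finset.mem_filter.1 hi).2
      by_contra h
      rw [hs i, ht i] at hi'
      simp only [hrdef, if_neg h] at hi'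
      exact lt_irrefl _ hi'
    have hTS : T - S = ∑ i ∈ P, (t i - s i) := by
      have h1 : T - S = ∑ i, (t i - s i) := by
        rw [hSdef, hTdef, Finset.sum_sub_distrib]
      rw [h1, ← Finset.sum_filter_add_sum_filter_not univ (fun i => s i < t i)]
      have h2 : ∑ i ∈ univ.filter (fun i => ¬ s i < t i), (t i - s i) = 0 := by
        apply Finset.sum_eq_zero
        intro i hi
        have h3 : ¬ s i < t i := (Finset.mem_filter.1 hi).2
        have h4 := hmono i
        have h5 := not_lt.1 h3
        linarith
      rw [h2, add_zero]
    have hlip : ∀ i ∈ P, t i - s i ≤ lam/(2*(m:ℝ)*α i - lam) * (T - S) := by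
      intro i hi
      have hA := hAi i hi
      have hD := hDpos i hA
      have h1 : lam*S/(2*(m:ℝ)*α i - lam) ≤ lam*T/(2*(m:ℝ)*α i - lam) :=
        (div_le_div_iff_of_pos_right hD).2 (mul_le_mul_of_nonneg_left hST.le hlam.le)
      have h2 := clamp_lip (qi := q i) (Qi := Q i) h1
      rw [hs i, ht i]
      simp only [hrdef, if_pos hA]
      calc max (q i) (min (Q i) (lam*T/(2*(m:ℝ)*α i - lam)))
          - max (q i) (min (Q i) (lam*S/(2*(m:ℝ)*α i - lam)))
        ≤ lam*T/(2*(m:ℝ)*α i - lam) - lam*S/(2*(m:ℝ)*α i - lam) := h2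
        _ = lam/(2*(m:ℝ)*α i - lam) * (T - S) := by ring
    have hlow : ∀ i ∈ P, lam/(2*(m:ℝ)*α i - lam) * S ≤ s i := by
      intro i hi
      have hA := hAi i hi
      have hi' : s i < t i := (Finset.mem_filter.1 hi).2
      have hsQ : s i < Q i := lt_of_lt_of_le hi' (hboxt i).2
      have hsr : s i = max (q i) (min (Q i) (lam*S/(2*(m:ℝ)*α i - lam))) := by
        rw [hs i]; simp only [hrdef, if_pos hA]
      have := clamp_lt_top hsr hsQ
      calc lam/(2*(m:ℝ)*α i - lam) * S = lam*S/(2*(m:ℝ)*α i - lam) := by ring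
        _ ≤ s i := this
    -- sum of coefficients
    set c : ℝ := ∑ i ∈ P, lam/(2*(m:ℝ)*α i - lam) with hcdef
    have e1 : T - S ≤ c * (T - S) := by
      calc T - S = ∑ i ∈ P, (t i - s i) := hTS
        _ ≤ ∑ i ∈ P, lam/(2*(m:ℝ)*α i - lam) * (T - S) := Finset.sum_le_sum hlip
        _ = c * (T - S) := by rw [hcdef, Finset.sum_mul]
    have hc1 : 1 ≤ c := by
      by_contra h
      push_neg at h
      nlinarith [sub_pos.2 hST]
    have e2 : c * S ≤ ∑ i ∈ P, s i := by
      rw [hcdef, Finset.sum_mul]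
      exact Finset.sum_le_sum hlow
    have e4 : S ≤ c * S := by nlinarith
    -- P must be all of univ
    have hPuniv : P = univ := by
      by_contra h
      have hne' : (univ.filter (fun i => ¬ s i < t i)).Nonempty := by
        rcases Finset.eq_empty_or_nonempty (univ.filter (fun i => ¬ s i < t i)) with he | hne
        · exfalso
          apply h
          rw [hPdef]
          apply Finset.filter_true_of_mem
          intro i _
          by_contra hc
          have : i ∈ univ.filter (fun i => ¬ s i < t i) := Finset.mem_filter.2 ⟨mem_univ i, hc⟩
          rw [he] at this
          exact absurd this (Finset.notMem_empty i)
        · exact hne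
      have hsplit : (∑ i ∈ P, s i) + ∑ i ∈ univ.filter (fun i => ¬ s i < t i), s i = S := by
        rw [hSdef, hPdef]
        exact Finset.sum_filter_add_sum_filter_not univ _ _
      have hpos2 : 0 < ∑ i ∈ univ.filter (fun i => ¬ s i < t i), s i :=
        Finset.sum_pos (fun i _ => lt_of_lt_of_le (hq i) (hboxs i).1) hne'
      linarith
    -- so every client is concave and the coefficients sum to exactly 1
    have e3 : ∑ i ∈ P, s i = S := by rw [hPuniv, hSdef]
    have hceq : c = 1 := by nlinarith
    have hAall : ∀ i, lam < (m:ℝ) * α i := by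
      intro i
      exact hAi i (hPuniv ▸ mem_univ i)
    have hcsum : ∑ i, lam/(2*(m:ℝ)*α i - lam) = 1 := by
      rw [← hceq, hcdef, hPuniv]
    -- contradiction with lam ≠ lamstar by strict monotonicity
    have hDstar : ∀ i, 0 < 2*(m:ℝ)*α i - lamstar := by
      intro i
      have h1 : lamstar < (m:ℝ) * αmin := hlamstar.2
      have h2 : (m:ℝ) * αmin ≤ (m:ℝ) * α i := by
        apply mul_le_mul_of_nonneg_left (hαminle i) hM0.le
      nlinarith [hα i]
    rcases lt_trichotomy lam lamstar with h | h | h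
    · have : (1:ℝ) < 1 := by
        calc (1:ℝ) = ∑ i, lam/(2*(m:ℝ)*α i - lam) := hcsum.symm
          _ < ∑ i, lamstar/(2*(m:ℝ)*α i - lamstar) := by
              apply Finset.sum_lt_sum_of_nonempty univ_nonempty
              intro i _
              rw [div_lt_div_iff₀ (hDpos i (hAall i)) (hDstar i)]
              nlinarith [mul_pos (sub_pos.2 h) (mul_pos hM0 (hα i))]
          _ = 1 := hlseq
      exact lt_irrefl _ this
    · exact hne h
    · have : (1:ℝ) < 1 := by
        calc (1:ℝ) = ∑ i, lamstar/(2*(m:ℝ)*α i - lamstar) := hlseq.symm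
          _ < ∑ i, lam/(2*(m:ℝ)*α i - lam) := by
              apply Finset.sum_lt_sum_of_nonempty univ_nonempty
              intro i _
              rw [div_lt_div_iff₀ (hDstar i) (hDpos i (hAall i))]
              nlinarith [mul_pos (sub_pos.2 h) (mul_pos hM0 (hα i))]
          _ = 1 := hcsum
      exact lt_irrefl _ this
  refine ⟨s₀, hs₀NE, ?_⟩
  intro t ht
  have hcht := (hNEiff t).1 ht
  have hchs := (hNEiff s₀).1 hs₀NE
  rcases lt_trichotomy (∑ j, t j) (∑ j, s₀ j) with h | h | h
  · exact absurd (hlt_false t s₀ hcht hchs h) (fun h => h)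
  · funext i
    rw [hcht i, hchs i, h]
  · exact absurd (hlt_false s₀ t hchs hcht h) (fun h => h)
end

section
/- Suppose λ = λ* and c_1 < c_2. Then the homogeneous FL game Γ_FL^h has infinitely many Nash equilibria; moreover, a profile s* ∈ ∏_i [q_i, Q_i] is a Nash equilibrium if and only if there exists c ∈ [c_1, c_2] such that s*_i = λ* c / (2 α_i − λ*/m) for every i ∈ [m]. -/
open Finset

set_option maxHeartbeats 1600000 in
/-- If `λ = λ*` and `c₁ < c₂`, the homogeneous FL game has
infinitely many Nash equilibria, and `s*` is a Nash equilibrium iff there is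
`c ∈ [c₁, c₂]` with `s*_i = λ* c / (2 α_i − λ*/m)` for all `i`. -/
theorem homFL_infinite_NE_at_jump
    (m : ℕ) (hm : 1 ≤ m) (α q Q : Fin m → ℝ)
    (hα : ∀ i, 0 < α i) (hq : ∀ i, 0 < q i) (hqQ : ∀ i, q i ≤ Q i)
    (αmin : ℝ) (hαmin : IsLeast (Set.range α) αmin)
    (lamstar : ℝ) (hlamstar : lamstar ∈ Set.Ioo 0 ((m : ℝ) * αmin))
    (hlseq : ∑ i, lamstar / (2 * (m : ℝ) * α i - lamstar) = 1)
    (c₁ c₂ : ℝ)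
    (hc₁ : IsGreatest (Set.range fun i => 2 * α i * q i / lamstar - q i / (m : ℝ)) c₁)
    (hc₂ : IsLeast (Set.range fun i => 2 * α i * Q i / lamstar - Q i / (m : ℝ)) c₂)
    (hc : c₁ < c₂) :
    {s : Fin m → ℝ | isNE m lamstar α q Q s}.Infinite ∧
    ∀ s : Fin m → ℝ, (∀ i, s i ∈ Set.Icc (q i) (Q i)) →
      (isNE m lamstar α q Q s ↔
        ∃ c ∈ Set.Icc c₁ c₂, ∀ i : Fin m,
          s i = lamstar * c / (2 * α i - lamstar / (m : ℝ))) := by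
  obtain ⟨hlam, hlt⟩ := hlamstar
  have hm0 : (0:ℝ) < (m:ℝ) := by exact_mod_cast Nat.lt_of_lt_of_le Nat.zero_lt_one hm
  have hmne : (m:ℝ) ≠ 0 := hm0.ne'
  have hamin : ∀ i, αmin ≤ α i := fun i => hαmin.2 ⟨i, rfl⟩
  have hA : ∀ i, 0 < α i - lamstar / (m:ℝ) := by
    intro i
    have h1 : lamstar / (m:ℝ) < αmin := by
      rw [div_lt_iff₀ hm0]; nlinarith
    linarith [hamin i]
  have hαminpos : 0 < αmin := by
    obtain ⟨i, hi⟩ := hαmin.1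
    exact hi ▸ hα i
  have hd : ∀ i, 0 < 2 * α i - lamstar / (m:ℝ) := by
    intro i; have := hA i; have := hα i; linarith
  have hdm : ∀ i, (m:ℝ) * (2 * α i - lamstar / (m:ℝ)) = 2 * (m:ℝ) * α i - lamstar := by
    intro i; field_simp
  have hD : ∀ i, 0 < 2 * (m:ℝ) * α i - lamstar := by
    intro i; rw [← hdm i]; exact mul_pos hm0 (hd i)
  have hE : ∀ (i : Fin m) (y : ℝ), 2 * α i * y / lamstar - y / (m:ℝ)
      = y * (2 * α i - lamstar / (m:ℝ)) / lamstar := by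
    intro i y; field_simp
  -- sum of the parametric profile
  have hsum : ∀ c : ℝ, ∑ i, lamstar * c / (2 * α i - lamstar / (m:ℝ)) = (m:ℝ) * c := by
    intro c
    have : ∀ i : Fin m, lamstar * c / (2 * α i - lamstar / (m:ℝ))
        = (m:ℝ) * c * (lamstar / (2 * (m:ℝ) * α i - lamstar)) := by
      intro i
      field_simp
    rw [Finset.sum_congr rfl (fun i _ => this i), ← Finset.mul_sum, hlseq, mul_one]
  -- sum after update
  have hupd : ∀ (s : Fin m → ℝ) (i : Fin m) (x : ℝ),
      ∑ j, Function.update s i x j = (∑ j, s j) - s i + x := by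
    intro s i x
    rw [Finset.sum_update_of_mem (Finset.mem_univ i),
      Finset.sum_sdiff_eq_sub (Finset.subset_univ {i}), Finset.sum_singleton]
    ring
  -- payoff difference formula
  have hdiff : ∀ (s : Fin m → ℝ) (i : Fin m) (x : ℝ),
      payH m lamstar α s i - payH m lamstar α (Function.update s i x) i
        = (s i - x) * (lamstar / (m:ℝ) * ((∑ j, s j) - s i)
            - (α i - lamstar / (m:ℝ)) * (s i + x)) := by
    intro s i x
    simp only [payH, hupd, Function.update_self]
    ring
  -- forward construction: the parametric profile is an NE
  have hfwd : ∀ c : ℝ, c₁ ≤ c → c ≤ c₂ →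
      isNE m lamstar α q Q (fun i => lamstar * c / (2 * α i - lamstar / (m:ℝ))) := by
    intro c hc1 hc2
    have hbound : ∀ i, lamstar * c / (2 * α i - lamstar / (m:ℝ)) ∈ Set.Icc (q i) (Q i) := by
      intro i
      constructor
      · have h1 : 2 * α i * q i / lamstar - q i / (m:ℝ) ≤ c :=
          le_trans (hc₁.2 ⟨i, rfl⟩) hc1
        rw [le_div_iff₀ (hd i)]
        have h2 := mul_le_mul_of_nonneg_left h1 hlam.le
        have h3 : lamstar * (2 * α i * q i / lamstar - q i / (m:ℝ))
            = 2 * α i * q i - lamstar * q i / (m:ℝ) := by field_simp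
        rw [h3] at h2
        have h4 : q i * (2 * α i - lamstar / (m:ℝ))
            = 2 * α i * q i - lamstar * q i / (m:ℝ) := by ring
        linarith
      · have h1 : c ≤ 2 * α i * Q i / lamstar - Q i / (m:ℝ) :=
          le_trans hc2 (hc₂.2 ⟨i, rfl⟩)
        rw [div_le_iff₀ (hd i)]
        have h2 := mul_le_mul_of_nonneg_left h1 hlam.le
        have h3 : lamstar * (2 * α i * Q i / lamstar - Q i / (m:ℝ))
            = 2 * α i * Q i - lamstar * Q i / (m:ℝ) := by field_simp
        rw [h3] at h2
        have h4 : Q i * (2 * α i - lamstar / (m:ℝ))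
            = 2 * α i * Q i - lamstar * Q i / (m:ℝ) := by ring
        linarith
    refine ⟨hbound, ?_⟩
    intro i x hx
    set s : Fin m → ℝ := fun i => lamstar * c / (2 * α i - lamstar / (m:ℝ)) with hs
    have key : s i * (2 * α i - lamstar / (m:ℝ)) = lamstar * c :=
      div_mul_cancel₀ _ (hd i).ne'
    have h2 := hdiff s i x
    rw [hsum c] at h2
    have hid : (s i - x) * (lamstar / (m:ℝ) * ((m:ℝ) * c - s i)
        - (α i - lamstar / (m:ℝ)) * (s i + x))
        = (α i - lamstar / (m:ℝ)) * (s i - x) ^ 2 := by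
      set μ : ℝ := lamstar / (m:ℝ) with hμ
      have hμm : μ * (m:ℝ) = lamstar := by rw [hμ]; field_simp
      linear_combination (s i - x) * (c * hμm - key)
    nlinarith [mul_nonneg (hA i).le (sq_nonneg (s i - x)), h2, hid]
  constructor
  · -- infinitude
    have hinj : Function.Injective
        (fun c : ℝ => (fun i => lamstar * c / (2 * α i - lamstar / (m:ℝ)) : Fin m → ℝ)) := by
      intro a b hab
      have h0 := congrFun hab ⟨0, hm⟩
      simp only at h0
      rw [div_eq_div_iff (hd _).ne' (hd _).ne'] at h0
      have := mul_right_cancel₀ (hd ⟨0, hm⟩).ne' h0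
      exact mul_left_cancel₀ hlam.ne' this
    have hIcc : (Set.Icc c₁ c₂).Infinite := Set.Icc_infinite hc
    have himg := hIcc.image (hinj.injOn)
    refine himg.mono ?_
    rintro _ ⟨c, hcmem, rfl⟩
    exact hfwd c hcmem.1 hcmem.2
  · intro s hsb
    constructor
    · -- NE implies parametric form
      intro hNE
      set S : ℝ := ∑ j, s j with hS
      set c : ℝ := S / (m:ℝ) with hcdef
      have hSc : S = (m:ℝ) * c := by rw [hcdef]; field_simp
      have htval : ∀ i, lamstar * c / (2 * α i - lamstar / (m:ℝ))
          * (2 * α i - lamstar / (m:ℝ)) = lamstar * c := fun i =>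
        div_mul_cancel₀ _ (hd i).ne'
      -- claim A : if t i < s i then s i = q i
      have hclaimA : ∀ i, lamstar * c / (2 * α i - lamstar / (m:ℝ)) < s i → s i = q i := by
        intro i hti
        by_contra hne
        have hqi : q i < s i := lt_of_le_of_ne (hsb i).1 (Ne.symm hne)
        have hti' : lamstar * c < s i * (2 * α i - lamstar / (m:ℝ)) :=
          (div_lt_iff₀ (hd i)).mp hti
        set A : ℝ := α i - lamstar / (m:ℝ) with hAdef
        have hApos : 0 < A := hA i
        set v : ℝ := lamstar * (S - s i) / (2 * (m:ℝ) * A) with hvdef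
        have hvs : v < s i := by
          rw [hvdef, div_lt_iff₀ (by positivity)]
          have h5 := mul_lt_mul_of_pos_left hti' hm0
          have h6 : (m:ℝ) * (s i * (2 * α i - lamstar / (m:ℝ)))
              = s i * (2 * (m:ℝ) * α i - lamstar) := by rw [← hdm i]; ring
          rw [h6] at h5
          have hml : (m:ℝ) * (lamstar / (m:ℝ)) = lamstar := by field_simp
          have h7 : s i * (2 * (m:ℝ) * A) = s i * (2 * (m:ℝ) * α i - lamstar) - lamstar * s i := by
            rw [hAdef]; linear_combination (-2 * s i) * hml
          rw [hSc]
          nlinarith [h5, h7]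
        set x : ℝ := max (q i) v with hxdef
        have hx1 : q i ≤ x := le_max_left _ _
        have hxlt : x < s i := max_lt hqi hvs
        have hx2 : x ≤ Q i := hxlt.le.trans (hsb i).2
        have hge := hNE.2 i x ⟨hx1, hx2⟩
        have hdx := hdiff s i x
        have hexpr : lamstar / (m:ℝ) * (S - s i) = 2 * A * v := by
          rw [hvdef]; field_simp
        rw [← hS, hexpr, ← hAdef] at hdx
        have hvx : v ≤ x := le_max_right _ _
        have hneg : (s i - x) * (2 * A * v - A * (s i + x)) < 0 := by
          have h8 : 2 * A * v - A * (s i + x) = A * ((v - s i) + (v - x)) := by ring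
          rw [h8]
          apply mul_neg_of_pos_of_neg (by linarith)
          apply mul_neg_of_pos_of_neg hApos
          linarith
        linarith [hge, hdx, hneg]
      -- claim B : if s i < t i then s i = Q i
      have hclaimB : ∀ i, s i < lamstar * c / (2 * α i - lamstar / (m:ℝ)) → s i = Q i := by
        intro i hti
        by_contra hne
        have hQi : s i < Q i := lt_of_le_of_ne (hsb i).2 hne
        have hti' : s i * (2 * α i - lamstar / (m:ℝ)) < lamstar * c :=
          (lt_div_iff₀ (hd i)).mp hti
        set A : ℝ := α i - lamstar / (m:ℝ) with hAdef
        have hApos : 0 < A := hA i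
        set v : ℝ := lamstar * (S - s i) / (2 * (m:ℝ) * A) with hvdef
        have hvs : s i < v := by
          rw [hvdef, lt_div_iff₀ (by positivity)]
          have h5 := mul_lt_mul_of_pos_left hti' hm0
          have h6 : (m:ℝ) * (s i * (2 * α i - lamstar / (m:ℝ)))
              = s i * (2 * (m:ℝ) * α i - lamstar) := by rw [← hdm i]; ring
          rw [h6] at h5
          have hml : (m:ℝ) * (lamstar / (m:ℝ)) = lamstar := by field_simp
          have h7 : s i * (2 * (m:ℝ) * A) = s i * (2 * (m:ℝ) * α i - lamstar) - lamstar * s i := by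
            rw [hAdef]; linear_combination (-2 * s i) * hml
          rw [hSc]
          nlinarith [h5, h7]
        set x : ℝ := min (Q i) v with hxdef
        have hx2 : x ≤ Q i := min_le_left _ _
        have hxgt : s i < x := lt_min hQi hvs
        have hx1 : q i ≤ x := (hsb i).1.trans hxgt.le
        have hge := hNE.2 i x ⟨hx1, hx2⟩
        have hdx := hdiff s i x
        have hexpr : lamstar / (m:ℝ) * (S - s i) = 2 * A * v := by
          rw [hvdef]; field_simp
        rw [← hS, hexpr, ← hAdef] at hdx
        have hvx : x ≤ v := min_le_right _ _
        have hneg : (s i - x) * (2 * A * v - A * (s i + x)) < 0 := by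
          have h8 : 2 * A * v - A * (s i + x) = A * ((v - s i) + (v - x)) := by ring
          rw [h8]
          apply mul_neg_of_neg_of_pos (by linarith)
          apply mul_pos hApos
          linarith
        linarith [hge, hdx, hneg]
      -- all coordinates equal the parametric value
      have hTsum : ∑ i, lamstar * c / (2 * α i - lamstar / (m:ℝ)) = S := by
        rw [hsum c, hSc]
      have heq : ∀ i, s i = lamstar * c / (2 * α i - lamstar / (m:ℝ)) := by
        by_contra hne
        push_neg at hne
        obtain ⟨i0, hi0⟩ := hne
        rcases lt_or_gt_of_ne hi0 with hlt' | hgt'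
        · -- s i0 < t i0
          have hQ0 : s i0 = Q i0 := hclaimB i0 hlt'
          -- derive c₂ < c
          have hc2lt : c₂ < c := by
            have h1 : Q i0 * (2 * α i0 - lamstar / (m:ℝ)) < lamstar * c := by
              rw [← hQ0]; exact (lt_div_iff₀ (hd i0)).mp hlt'
            have h2 : c₂ ≤ 2 * α i0 * Q i0 / lamstar - Q i0 / (m:ℝ) := hc₂.2 ⟨i0, rfl⟩
            have h3 : 2 * α i0 * Q i0 / lamstar - Q i0 / (m:ℝ) < c := by
              rw [hE i0 (Q i0), div_lt_iff₀ hlam]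
              linarith [h1, mul_comm lamstar c]
            linarith
          -- so no coordinate has t i < s i (else c < c₁ < c₂ < c)
          have hallle : ∀ i, s i ≤ lamstar * c / (2 * α i - lamstar / (m:ℝ)) := by
            intro i
            by_contra hgt
            push_neg at hgt
            have hqi : s i = q i := hclaimA i hgt
            have h1 : lamstar * c < q i * (2 * α i - lamstar / (m:ℝ)) := by
              rw [← hqi]; exact (div_lt_iff₀ (hd i)).mp hgt
            have h2 : 2 * α i * q i / lamstar - q i / (m:ℝ) ≤ c₁ := hc₁.2 ⟨i, rfl⟩
            have h3 : c < 2 * α i * q i / lamstar - q i / (m:ℝ) := by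
              rw [hE i (q i), lt_div_iff₀ hlam]
              linarith [h1, mul_comm lamstar c]
            linarith
          have hstrict : ∑ j, s j < ∑ i, lamstar * c / (2 * α i - lamstar / (m:ℝ)) := by
            apply Finset.sum_lt_sum (fun i _ => hallle i) ⟨i0, Finset.mem_univ i0, hlt'⟩
          rw [hTsum, ← hS] at hstrict
          exact lt_irrefl _ hstrict
        · -- t i0 < s i0
          have hqi0 : s i0 = q i0 := hclaimA i0 hgt'
          have hc1lt : c < c₁ := by
            have h1 : lamstar * c < q i0 * (2 * α i0 - lamstar / (m:ℝ)) := by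
              rw [← hqi0]; exact (div_lt_iff₀ (hd i0)).mp hgt'
            have h2 : 2 * α i0 * q i0 / lamstar - q i0 / (m:ℝ) ≤ c₁ := hc₁.2 ⟨i0, rfl⟩
            have h3 : c < 2 * α i0 * q i0 / lamstar - q i0 / (m:ℝ) := by
              rw [hE i0 (q i0), lt_div_iff₀ hlam]
              linarith [h1, mul_comm lamstar c]
            linarith
          have hallge : ∀ i, lamstar * c / (2 * α i - lamstar / (m:ℝ)) ≤ s i := by
            intro i
            by_contra hgt
            push_neg at hgt
            have hQi : s i = Q i := hclaimB i hgt
            have h1 : Q i * (2 * α i - lamstar / (m:ℝ)) < lamstar * c := by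
              rw [← hQi]; exact (lt_div_iff₀ (hd i)).mp hgt
            have h2 : c₂ ≤ 2 * α i * Q i / lamstar - Q i / (m:ℝ) := hc₂.2 ⟨i, rfl⟩
            have h3 : 2 * α i * Q i / lamstar - Q i / (m:ℝ) < c := by
              rw [hE i (Q i), div_lt_iff₀ hlam]
              linarith [h1, mul_comm lamstar c]
            linarith
          have hstrict : ∑ i, lamstar * c / (2 * α i - lamstar / (m:ℝ)) < ∑ j, s j := by
            apply Finset.sum_lt_sum (fun i _ => hallge i) ⟨i0, Finset.mem_univ i0, hgt'⟩
          rw [hTsum, ← hS] at hstrict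
          exact lt_irrefl _ hstrict
      -- c is in [c₁, c₂]
      refine ⟨c, ⟨?_, ?_⟩, heq⟩
      · obtain ⟨i1, hi1⟩ := hc₁.1
        simp only at hi1
        have h1 : q i1 ≤ lamstar * c / (2 * α i1 - lamstar / (m:ℝ)) := by
          rw [← heq i1]; exact (hsb i1).1
        rw [le_div_iff₀ (hd i1)] at h1
        rw [← hi1, hE i1 (q i1), div_le_iff₀ hlam]
        linarith [h1, mul_comm lamstar c]
      · obtain ⟨i2, hi2⟩ := hc₂.1
        simp only at hi2
        have h1 : lamstar * c / (2 * α i2 - lamstar / (m:ℝ)) ≤ Q i2 := by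
          rw [← heq i2]; exact (hsb i2).2
        rw [div_le_iff₀ (hd i2)] at h1
        rw [← hi2, hE i2 (Q i2), le_div_iff₀ hlam]
        linarith [h1, mul_comm lamstar c]
    · rintro ⟨c, hcmem, hs⟩
      have hseq : s = fun i => lamstar * c / (2 * α i - lamstar / (m:ℝ)) := funext hs
      rw [hseq]
      exact hfwd c hcmem.1 hcmem.2
end

section
/- If λ ∈ (0, λ_1), then the profile s* = (q_1,…,q_m) is a Nash equilibrium of the homogeneous FL game Γ_FL^h, and it is the unique Nash equilibrium of Γ_FL^h. -/
open Finset

lemma pay_diff (m : ℕ) (lam : ℝ) (α : Fin m → ℝ) (s : Fin m → ℝ) (i : Fin m) (x : ℝ) :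
    payH m lam α s i - payH m lam α (Function.update s i x) i
      = (s i - x) * (lam / m * ((∑ j, s j) + x) - α i * (s i + x)) := by
  have hsum : ∑ j, Function.update s i x j = (∑ j, s j) - s i + x := by
    rw [Finset.sum_update_of_mem (Finset.mem_univ i), ← Finset.erase_eq,
      Finset.sum_erase_eq_sub (Finset.mem_univ i)]
    ring
  unfold payH
  rw [hsum, Function.update_self]
  ring

/-- If `λ ∈ (0, λ₁)` with `λ₁` the activation point, then
`s* = (q_1, …, q_m)` is the unique Nash equilibrium of `Γ_FL^h`. -/
theorem homFL_NE_below_activation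
    (m : ℕ) (hm : 1 ≤ m) (α q Q : Fin m → ℝ)
    (hα : ∀ i, 0 < α i) (hq : ∀ i, 0 < q i) (hqQ : ∀ i, q i ≤ Q i)
    (qbar : ℝ) (hqbar : qbar = (∑ i, q i) / (m : ℝ))
    (lam₁ : ℝ)
    (hlam₁ : IsLeast (Set.range fun i => 2 * (α i * q i / (qbar + q i / (m : ℝ)))) lam₁)
    (lam : ℝ) (hlam : lam ∈ Set.Ioo 0 lam₁) :
    isNE m lam α q Q q ∧ ∀ s : Fin m → ℝ, isNE m lam α q Q s → s = q := by
  have hm0 : (0:ℝ) < m := by exact_mod_cast hm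
  have hlam0 : 0 < lam := hlam.1
  have hc0 : 0 < lam / m := div_pos hlam0 hm0
  -- key inequality
  have hkey : ∀ i, lam / m * ((∑ j, q j) + q i) < 2 * (α i * q i) := by
    intro i
    have hd : 0 < qbar + q i / m := by
      rw [hqbar]
      have h1 : 0 < ∑ j, q j := Finset.sum_pos (fun j _ => hq j) ⟨⟨0, hm⟩, Finset.mem_univ _⟩
      have h2 := div_pos h1 hm0
      have h3 := div_pos (hq i) hm0
      linarith
    have h1 : lam < 2 * (α i * q i) / (qbar + q i / m) := by
      have := hlam₁.2 ⟨i, rfl⟩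
      rw [mul_div_assoc]
      exact lt_of_lt_of_le hlam.2 this
    have h2 : lam * (qbar + q i / m) < 2 * (α i * q i) := (lt_div_iff₀ hd).mp h1
    have h3 : lam / m * ((∑ j, q j) + q i) = lam * (qbar + q i / m) := by
      rw [hqbar]; field_simp
    rw [h3]; exact h2
  have hSqi : ∀ i, q i ≤ ∑ j, q j := fun i =>
    Finset.single_le_sum (fun j _ => (hq j).le) (Finset.mem_univ i)
  have hcα : ∀ i, lam / m < α i := by
    intro i
    have h1 := hkey i
    have h2 := hSqi i
    have h3 := hq i
    nlinarith
  constructor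
  · refine ⟨fun i => ⟨le_refl _, hqQ i⟩, fun i x hx => ?_⟩
    rw [← sub_nonneg, pay_diff]
    have hx1 : q i ≤ x := hx.1
    have hfac : lam / m * ((∑ j, q j) + x) - α i * (q i + x) ≤ 0 := by
      nlinarith [hkey i, hcα i]
    nlinarith
  · intro s hs
    by_contra hne
    obtain ⟨j, hj⟩ := Function.ne_iff.mp hne
    have hle : ∀ k, q k ≤ s k := fun k => (hs.1 k).1
    obtain ⟨i, -, hmax⟩ := Finset.exists_max_image Finset.univ (fun k => s k / q k)
      ⟨⟨0, hm⟩, Finset.mem_univ _⟩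
    set t := s i / q i with ht
    have hsk : ∀ k, s k ≤ t * q k := by
      intro k
      have := hmax k (Finset.mem_univ k)
      exact (div_le_iff₀ (hq k)).mp this
    have hsi : s i = t * q i := by
      rw [ht, div_mul_cancel₀ _ (hq i).ne']
    have ht1 : 1 < t := by
      have hjq : q j < s j := lt_of_le_of_ne (hle j) (Ne.symm hj)
      have : 1 < s j / q j := (one_lt_div (hq j)).mpr hjq
      exact lt_of_lt_of_le this (hmax j (Finset.mem_univ j))
    have hqi_lt : q i < s i := by nlinarith [hq i]
    have hS : ∑ k, s k ≤ t * ∑ k, q k := by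
      rw [Finset.mul_sum]
      exact Finset.sum_le_sum fun k _ => hsk k
    -- limit argument: 2 * α i * s i ≤ lam/m * (S + s i)
    have hmain : 2 * (α i * s i) ≤ lam / m * ((∑ k, s k) + s i) := by
      apply le_of_forall_pos_le_add
      intro ε hε
      set x := max (q i) (s i - ε / α i) with hxdef
      have hx1 : q i ≤ x := le_max_left _ _
      have hx2 : x < s i := max_lt hqi_lt (by
        have : 0 < ε / α i := div_pos hε (hα i)
        linarith)
      have hNE := hs.2 i x ⟨hx1, hx2.le.trans (hs.1 i).2⟩
      rw [← sub_nonneg, pay_diff] at hNE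
      have hfac : 0 ≤ lam / m * ((∑ k, s k) + x) - α i * (s i + x) := by
        by_contra h
        push_neg at h
        nlinarith
      have hsx : α i * (s i - x) ≤ ε := by
        have h1 : s i - ε / α i ≤ x := le_max_right _ _
        have h2 : s i - x ≤ ε / α i := by linarith
        calc α i * (s i - x) ≤ α i * (ε / α i) :=
              mul_le_mul_of_nonneg_left h2 (hα i).le
          _ = ε := mul_div_cancel₀ _ (hα i).ne'
      nlinarith
    have hfin : lam / m * ((∑ k, s k) + s i) < 2 * (α i * s i) := by
      have h1 : lam / m * ((∑ k, s k) + s i) ≤ lam / m * (t * ((∑ k, q k) + q i)) := by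
        apply mul_le_mul_of_nonneg_left _ hc0.le
        nlinarith
      have h2 : lam / m * (t * ((∑ k, q k) + q i)) < t * (2 * (α i * q i)) := by
        have := mul_lt_mul_of_pos_left (hkey i) (by linarith : (0:ℝ) < t)
        calc lam / m * (t * ((∑ k, q k) + q i)) = t * (lam / m * ((∑ k, q k) + q i)) := by ring
          _ < t * (2 * (α i * q i)) := this
      have h3 : t * (2 * (α i * q i)) = 2 * (α i * s i) := by rw [hsi]; ring
      linarith
    linarith
end

section
/- If λ ∈ (λ*, λ_2), then the unique Nash equilibrium s* of the homogeneous FL game Γ_FL^h satisfies s̄* > c_2, where s̄* = (1/m) Σ_{i=1}^m s*_i. -/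
open Finset

namespace HomFLAux

/-- clamp of `u` to `[q,Q]`. -/
noncomputable def hfun (m : ℕ) (lam : ℝ) (α q Q : Fin m → ℝ) (S : ℝ) (i : Fin m) : ℝ :=
  if lam < (m : ℝ) * α i then
    min (Q i) (max (q i) (lam * S / (2 * (m : ℝ) * α i - lam)))
  else Q i

lemma hfun_mem {m : ℕ} {lam : ℝ} {α q Q : Fin m → ℝ} (S : ℝ) (i : Fin m)
    (hqQ : q i ≤ Q i) : hfun m lam α q Q S i ∈ Set.Icc (q i) (Q i) := by
  unfold hfun
  split_ifs
  · exact ⟨le_min hqQ (le_max_left _ _), min_le_left _ _⟩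
  · exact ⟨hqQ, le_refl _⟩

lemma sum_update {m : ℕ} (s : Fin m → ℝ) (i : Fin m) (x : ℝ) :
    ∑ j, Function.update s i x j = (∑ j, s j) - s i + x := by
  rw [Finset.sum_update_of_mem (Finset.mem_univ i),
    Finset.sum_sdiff_eq_sub (Finset.subset_univ {i}), Finset.sum_singleton]
  ring

lemma clamp_le (q Q S1 S2 u1 u2 : ℝ) (hq : 0 < q) (hqQ : q ≤ Q)
    (hS1 : 0 < S1) (hS : S1 < S2) (hu1 : 0 < u1) (huu : u1 * S2 = u2 * S1) :
    min Q (max q u2) * S1 ≤ min Q (max q u1) * S2 := by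
  have hS2 : 0 < S2 := hS1.trans hS
  have hu2 : u1 < u2 := by nlinarith [mul_pos hu1 (sub_pos.mpr hS)]
  have hQ0 : 0 < Q := lt_of_lt_of_le hq hqQ
  rcases le_or_gt u2 Q with h2 | h2
  · rcases le_or_gt q u1 with h1 | h1
    · rw [max_eq_right h1, max_eq_right (h1.trans hu2.le), min_eq_right h2,
        min_eq_right (hu2.le.trans h2)]
      linarith [huu]
    · rw [max_eq_left h1.le, min_eq_right hqQ]
      have hb : min Q (max q u2) * S1 ≤ max q u2 * S1 :=
        mul_le_mul_of_nonneg_right (min_le_right _ _) hS1.le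
      have hc : max q u2 * S1 ≤ q * S2 := by
        rcases le_total u2 q with h4 | h4
        · rw [max_eq_left h4]; nlinarith [mul_pos hq (sub_pos.mpr hS)]
        · rw [max_eq_right h4]; nlinarith [mul_pos hS2 (sub_pos.mpr h1)]
      linarith
  · have hL : min Q (max q u2) = Q := by
      rw [max_eq_right (le_of_lt (lt_of_le_of_lt hqQ h2))]
      exact min_eq_left (le_of_lt h2)
    rw [hL]
    have hRlb : min Q u1 ≤ min Q (max q u1) := min_le_min (le_refl _) (le_max_right _ _)
    have h3 : Q * S1 ≤ min Q u1 * S2 := by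
      rcases le_total Q u1 with h4 | h4
      · rw [min_eq_left h4]; nlinarith [mul_pos hQ0 (sub_pos.mpr hS)]
      · rw [min_eq_right h4]; nlinarith [mul_pos hS1 (sub_pos.mpr h2)]
    calc Q * S1 ≤ min Q u1 * S2 := h3
      _ ≤ min Q (max q u1) * S2 := mul_le_mul_of_nonneg_right hRlb hS2.le

lemma clamp_lt (q Q S1 S2 u1 u2 : ℝ) (hq : 0 < q) (hqQ : q ≤ Q)
    (hS1 : 0 < S1) (hS : S1 < S2) (hu1 : 0 < u1) (huu : u1 * S2 = u2 * S1)
    (hclamp : u1 < q ∨ Q < u1) :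
    min Q (max q u2) * S1 < min Q (max q u1) * S2 := by
  have hS2 : 0 < S2 := hS1.trans hS
  have hu2 : u1 < u2 := by nlinarith [mul_pos hu1 (sub_pos.mpr hS)]
  have hQ0 : 0 < Q := lt_of_lt_of_le hq hqQ
  rcases hclamp with h1 | h1
  · have hR : min Q (max q u1) = q := by rw [max_eq_left h1.le, min_eq_right hqQ]
    rw [hR]
    have hL1 : min Q (max q u2) * S1 ≤ max q u2 * S1 :=
      mul_le_mul_of_nonneg_right (min_le_right _ _) hS1.le
    have hL2 : max q u2 * S1 < q * S2 := by
      rcases le_total u2 q with h4 | h4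
      · rw [max_eq_left h4]; nlinarith [mul_pos hq (sub_pos.mpr hS)]
      · rw [max_eq_right h4]; nlinarith [mul_pos hS2 (sub_pos.mpr h1)]
    linarith
  · have hR : min Q (max q u1) = Q := by
      rw [max_eq_right (hqQ.trans h1.le)]; exact min_eq_left h1.le
    have hL : min Q (max q u2) = Q := by
      rw [max_eq_right (hqQ.trans (h1.trans hu2).le)]
      exact min_eq_left (h1.trans hu2).le
    rw [hR, hL]
    nlinarith [mul_pos hQ0 (sub_pos.mpr hS)]

set_option maxHeartbeats 1000000 in
lemma BR_iff {m : ℕ} (hm : 2 ≤ m) {lam : ℝ} (hlam0 : 0 < lam)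
    {α q Q : Fin m → ℝ} (hα : ∀ i, 0 < α i) (hq : ∀ i, 0 < q i)
    (hqQ : ∀ i, q i ≤ Q i)
    (s : Fin m → ℝ) (hs : ∀ j, s j ∈ Set.Icc (q j) (Q j)) (i : Fin m) :
    (∀ x ∈ Set.Icc (q i) (Q i),
        payH m lam α (Function.update s i x) i ≤ payH m lam α s i) ↔
      s i = hfun m lam α q Q (∑ j, s j) i := by
  have hM2 : (2:ℝ) ≤ (m:ℝ) := by exact_mod_cast hm
  have hM0 : (0:ℝ) < (m:ℝ) := by linarith
  set S := ∑ j, s j with hS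
  have hrest : 0 < S - s i := by
    have h1 := Finset.sum_erase_add Finset.univ s (Finset.mem_univ i)
    have h2 : 0 < ∑ j ∈ Finset.univ.erase i, s j := by
      apply Finset.sum_pos (fun j _ => lt_of_lt_of_le (hq j) (hs j).1)
      rw [← Finset.card_pos, Finset.card_erase_of_mem (Finset.mem_univ i),
        Finset.card_univ, Fintype.card_fin]
      omega
    rw [hS]; linarith
  have hdiff' : ∀ x : ℝ, (m:ℝ) * (payH m lam α (Function.update s i x) i - payH m lam α s i)
      = (x - s i) * (lam * (S - s i) + (lam - (m:ℝ) * α i) * (x + s i)) := by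
    intro x
    simp only [payH, sum_update, Function.update_self]
    rw [hS]
    field_simp
    ring
  have key : ∀ x : ℝ, (payH m lam α (Function.update s i x) i ≤ payH m lam α s i) ↔
      (x - s i) * (lam * (S - s i) + (lam - (m:ℝ) * α i) * (x + s i)) ≤ 0 := by
    intro x
    rw [← sub_nonpos (a := payH m lam α (Function.update s i x) i), ← hdiff' x]
    constructor
    · intro h; nlinarith
    · intro h; nlinarith
  by_cases hc : lam < (m:ℝ) * α i
  · -- concave case
    have hd : 0 < 2 * (m:ℝ) * α i - lam := by nlinarith [mul_pos hM0 (hα i)]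
    set u := lam * S / (2 * (m:ℝ) * α i - lam) with hu_def
    have hud : lam * S = u * (2 * (m:ℝ) * α i - lam) := by
      rw [hu_def]; field_simp
    have hfe : hfun m lam α q Q S i = min (Q i) (max (q i) u) := by
      unfold hfun; rw [if_pos hc]
    rw [hfe]
    rcases le_or_gt u (Q i) with huQ | huQ
    · rcases le_or_gt (q i) u with hqu | hqu
      · -- interior
        rw [max_eq_right hqu, min_eq_right huQ]
        constructor
        · intro hNE
          have h0 := (key u).mp (hNE u ⟨hqu, huQ⟩)
          have hPu : (u - s i) * (lam * (S - s i) + (lam - (m:ℝ) * α i) * (u + s i))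
              = (m:ℝ) * α i * (u - s i) ^ 2 := by linear_combination (u - s i) * hud
          rw [hPu] at h0
          have h1 : (u - s i) ^ 2 ≤ 0 := by nlinarith [mul_pos hM0 (hα i)]
          have h2 : (u - s i) ^ 2 = 0 := le_antisymm h1 (sq_nonneg _)
          have h3 : u - s i = 0 := by
            exact pow_eq_zero_iff (by norm_num : (2:ℕ) ≠ 0) |>.mp h2
          linarith
        · intro hsu x hx
          rw [key x]
          have hP : (x - s i) * (lam * (S - s i) + (lam - (m:ℝ) * α i) * (x + s i))
              = -(((m:ℝ) * α i - lam) * (x - u) ^ 2) := by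
            rw [hsu]; linear_combination (x - u) * hud
          rw [hP]
          nlinarith [mul_nonneg (sub_nonneg.mpr hc.le) (sq_nonneg (x - u))]
      · -- u < q i : s i = q i
        rw [max_eq_left hqu.le, min_eq_right (hqQ i)]
        have hlt : lam * S < q i * (2 * (m:ℝ) * α i - lam) := by
          rw [hud]; exact mul_lt_mul_of_pos_right hqu hd
        constructor
        · intro hNE
          have h0 := (key (q i)).mp (hNE (q i) ⟨le_refl _, hqQ i⟩)
          rcases eq_or_lt_of_le (hs i).1 with he | hlt2
          · exact he.symm
          · exfalso
            nlinarith [h0, mul_pos (sub_pos.mpr hlt2) (sub_pos.mpr hlt),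
              mul_pos (mul_pos hM0 (hα i))
                (mul_pos (sub_pos.mpr hlt2) (sub_pos.mpr hlt2))]
        · intro hsq x hx
          rw [key x, hsq]
          nlinarith [mul_nonneg (sub_nonneg.mpr hx.1) (sub_pos.mpr hlt).le,
            mul_nonneg (sub_pos.mpr hc).le (sq_nonneg (x - q i))]
    · -- Q i < u : s i = Q i
      have hmax : max (q i) u = u := max_eq_right (le_of_lt (lt_of_le_of_lt (hqQ i) huQ))
      rw [hmax, min_eq_left huQ.le]
      have hgt : Q i * (2 * (m:ℝ) * α i - lam) < lam * S := by
        rw [hud]; exact mul_lt_mul_of_pos_right huQ hd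
      constructor
      · intro hNE
        have h0 := (key (Q i)).mp (hNE (Q i) ⟨hqQ i, le_refl _⟩)
        rcases eq_or_lt_of_le (hs i).2 with he | hlt2
        · exact he
        · exfalso
          nlinarith [h0, mul_pos (sub_pos.mpr hlt2) (sub_pos.mpr hgt),
            mul_pos (mul_pos hM0 (hα i))
              (mul_pos (sub_pos.mpr hlt2) (sub_pos.mpr hlt2))]
      · intro hsQ x hx
        rw [key x, hsQ]
        nlinarith [mul_nonneg (sub_nonneg.mpr hx.2) (sub_pos.mpr hgt).le,
          mul_nonneg (sub_pos.mpr hc).le (sq_nonneg (x - Q i))]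
  · -- convex case: best response is Q i
    have hMa : (m:ℝ) * α i ≤ lam := not_lt.mp hc
    have hfe : hfun m lam α q Q S i = Q i := by unfold hfun; rw [if_neg hc]
    rw [hfe]
    have hQ0 : 0 < Q i := lt_of_lt_of_le (hq i) (hqQ i)
    constructor
    · intro hNE
      have h0 := (key (Q i)).mp (hNE (Q i) ⟨hqQ i, le_refl _⟩)
      rcases eq_or_lt_of_le (hs i).2 with he | hlt2
      · exact he
      · exfalso
        have hF : 0 < lam * (S - s i) + (lam - (m:ℝ) * α i) * (Q i + s i) := by
          have h1 : 0 < lam * (S - s i) := mul_pos hlam0 hrest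
          have h2 : 0 ≤ (lam - (m:ℝ) * α i) * (Q i + s i) :=
            mul_nonneg (sub_nonneg.mpr hMa)
              (by linarith [(hs i).1, hq i, hQ0])
          linarith
        nlinarith [mul_pos (sub_pos.mpr hlt2) hF]
    · intro hsQ x hx
      rw [key x, hsQ]
      have hSQ : 0 ≤ S - Q i := by rw [← hsQ]; exact hrest.le
      have hF : 0 ≤ lam * (S - Q i) + (lam - (m:ℝ) * α i) * (x + Q i) := by
        have h2 : 0 ≤ (lam - (m:ℝ) * α i) * (x + Q i) :=
          mul_nonneg (sub_nonneg.mpr hMa) (by linarith [hx.1, hq i, hQ0])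
        nlinarith [mul_nonneg hlam0.le hSQ]
      exact mul_nonpos_iff.mpr (Or.inr ⟨sub_nonpos.mpr hx.2, hF⟩)

lemma isNE_iff {m : ℕ} (hm : 2 ≤ m) {lam : ℝ} (hlam0 : 0 < lam)
    {α q Q : Fin m → ℝ} (hα : ∀ i, 0 < α i) (hq : ∀ i, 0 < q i)
    (hqQ : ∀ i, q i ≤ Q i) (s : Fin m → ℝ) :
    isNE m lam α q Q s ↔
      ((∀ j, s j ∈ Set.Icc (q j) (Q j)) ∧
        ∀ i, s i = hfun m lam α q Q (∑ j, s j) i) := by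
  constructor
  · rintro ⟨h1, h2⟩
    exact ⟨h1, fun i => (BR_iff hm hlam0 hα hq hqQ s h1 i).mp (h2 i)⟩
  · rintro ⟨h1, h2⟩
    exact ⟨h1, fun i => (BR_iff hm hlam0 hα hq hqQ s h1 i).mpr (h2 i)⟩


end HomFLAux

open HomFLAux in
set_option maxHeartbeats 1000000 in
/-- If `λ ∈ (λ*, λ₂)`, the unique Nash equilibrium `s*` of
`Γ_FL^h` satisfies `s̄* > c₂`. -/
theorem homFL_NE_between_jump_and_saturation
    (m : ℕ) (hm : 1 ≤ m) (α q Q : Fin m → ℝ)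
    (hα : ∀ i, 0 < α i) (hq : ∀ i, 0 < q i) (hqQ : ∀ i, q i ≤ Q i)
    (αmin : ℝ) (hαmin : IsLeast (Set.range α) αmin)
    (lamstar : ℝ) (hlamstar : lamstar ∈ Set.Ioo 0 ((m : ℝ) * αmin))
    (hlseq : ∑ i, lamstar / (2 * (m : ℝ) * α i - lamstar) = 1)
    (c₂ : ℝ)
    (hc₂ : IsLeast (Set.range fun i => 2 * α i * Q i / lamstar - Q i / (m : ℝ)) c₂)
    (Qbar : ℝ) (hQbar : Qbar = (∑ i, Q i) / (m : ℝ))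
    (lam₂ : ℝ)
    (hlam₂ : IsGreatest (Set.range fun i => 2 * (α i * Q i / (Qbar + Q i / (m : ℝ)))) lam₂)
    (lam : ℝ) (hlam : lam ∈ Set.Ioo lamstar lam₂) :
    (∃! s : Fin m → ℝ, isNE m lam α q Q s) ∧
    ∀ s : Fin m → ℝ, isNE m lam α q Q s → (∑ i, s i) / (m : ℝ) > c₂ := by
  obtain ⟨hls0, hlsa⟩ := hlamstar
  obtain ⟨hlam1, hlam2'⟩ := hlam
  have hlam0 : 0 < lam := hls0.trans hlam1
  have hαmin_le : ∀ i, αmin ≤ α i := fun i => hαmin.2 ⟨i, rfl⟩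
  have hlsai : ∀ i, lamstar < (m:ℝ) * α i := by
    intro i
    exact lt_of_lt_of_le hlsa
      (mul_le_mul_of_nonneg_left (hαmin_le i) (Nat.cast_nonneg m))
  -- m ≥ 2
  have hm2 : 2 ≤ m := by
    by_contra h
    have hm1 : m = 1 := by omega
    subst hm1
    have h0 : lamstar < α 0 := by simpa using hlsai 0
    have hcontr : lamstar / (2 * ((1:ℕ):ℝ) * α 0 - lamstar) < 1 := by
      rw [div_lt_one (by push_cast; linarith)]
      push_cast
      linarith
    rw [Fin.sum_univ_one] at hlseq
    exact absurd hlseq (ne_of_lt hcontr)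
  have hM2 : (2:ℝ) ≤ (m:ℝ) := by exact_mod_cast hm2
  have hM0 : (0:ℝ) < (m:ℝ) := by linarith
  haveI hNZ : Nonempty (Fin m) := ⟨⟨0, by omega⟩⟩
  have hQ0 : ∀ i, 0 < Q i := fun i => lt_of_lt_of_le (hq i) (hqQ i)
  -- the index attaining lam₂
  obtain ⟨i0, hi0⟩ := hlam₂.1
  have hQbar0 : 0 < Qbar := by
    rw [hQbar]
    exact div_pos (Finset.sum_pos (fun i _ => hQ0 i) Finset.univ_nonempty) hM0
  have hsat : lam * ((∑ i, Q i) + Q i0) < 2 * (m:ℝ) * α i0 * Q i0 := by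
    have h1 : lam < 2 * (α i0 * Q i0 / (Qbar + Q i0 / (m:ℝ))) := by
      rw [← hi0] at hlam2'; exact hlam2'
    have hden : 0 < Qbar + Q i0 / (m:ℝ) := by
      have := div_pos (hQ0 i0) hM0; linarith
    have h1' : lam < 2 * (α i0 * Q i0) / (Qbar + Q i0 / (m:ℝ)) := by
      rw [mul_div_assoc]; exact h1
    have h2 : lam * (Qbar + Q i0 / (m:ℝ)) < 2 * (α i0 * Q i0) :=
      (lt_div_iff₀ hden).mp h1'
    have e0 : Qbar + Q i0 / (m:ℝ) = ((∑ i, Q i) + Q i0) / (m:ℝ) := by rw [hQbar]; ring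
    rw [e0] at h2
    have h2' : lam * (((∑ i, Q i) + Q i0) / (m:ℝ))
        = (lam * ((∑ i, Q i) + Q i0)) / (m:ℝ) := by ring
    rw [h2'] at h2
    have h3 := (div_lt_iff₀ hM0).mp h2
    nlinarith [h3]
  have hconc0 : lam < (m:ℝ) * α i0 := by
    have hQsum : Q i0 < ∑ i, Q i := by
      have h1 := Finset.sum_erase_add Finset.univ Q (Finset.mem_univ i0)
      have h2 : 0 < ∑ j ∈ Finset.univ.erase i0, Q j := by
        apply Finset.sum_pos (fun j _ => hQ0 j)
        rw [← Finset.card_pos, Finset.card_erase_of_mem (Finset.mem_univ i0),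
          Finset.card_univ, Fintype.card_fin]
        omega
      linarith
    nlinarith [mul_pos hlam0 (sub_pos.mpr hQsum), hQ0 i0, hsat]
  -- uniqueness of positive fixed points of S ↦ ∑ i, hfun S i
  have hkey : ∀ S1 S2 : ℝ, 0 < S1 → S1 < S2 →
      (∑ i, hfun m lam α q Q S1 i) = S1 → (∑ i, hfun m lam α q Q S2 i) = S2 → False := by
    intro S1 S2 hS1 hS12 hF1 hF2
    have hS2 : 0 < S2 := hS1.trans hS12
    by_cases hall : ∀ i, lam < (m:ℝ) * α i ∧
        hfun m lam α q Q S1 i = lam * S1 / (2 * (m:ℝ) * α i - lam)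
    · have hsum : S1 = ∑ i, lam * S1 / (2 * (m:ℝ) * α i - lam) := by
        conv_lhs => rw [← hF1]
        exact Finset.sum_congr rfl (fun i _ => (hall i).2)
      have hsum2 : ∑ i, lam * S1 / (2 * (m:ℝ) * α i - lam)
          = S1 * ∑ i, lam / (2 * (m:ℝ) * α i - lam) := by
        rw [Finset.mul_sum]
        exact Finset.sum_congr rfl (fun i _ => by ring)
      have hW1 : (1:ℝ) = ∑ i, lam / (2 * (m:ℝ) * α i - lam) := by
        have h := hsum.trans hsum2
        have := mul_left_cancel₀ (ne_of_gt hS1) (by linarith : S1 * 1 = S1 * ∑ i, lam / (2 * (m:ℝ) * α i - lam))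
        linarith [this]
      have hgt : (1:ℝ) < ∑ i, lam / (2 * (m:ℝ) * α i - lam) := by
        rw [← hlseq]
        apply Finset.sum_lt_sum_of_nonempty Finset.univ_nonempty
        intro i _
        have hdi : 0 < 2 * (m:ℝ) * α i - lam := by
          nlinarith [(hall i).1, mul_pos hM0 (hα i)]
        have hdsi : 0 < 2 * (m:ℝ) * α i - lamstar := by
          nlinarith [hlsai i, mul_pos hM0 (hα i)]
        rw [div_lt_div_iff₀ hdsi hdi]
        nlinarith [mul_pos (mul_pos hM0 (hα i)) (sub_pos.mpr hlam1)]
      linarith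
    · push_neg at hall
      obtain ⟨i₁, hi₁⟩ := hall
      have hweak : ∀ i, hfun m lam α q Q S2 i * S1 ≤ hfun m lam α q Q S1 i * S2 := by
        intro i
        by_cases hci : lam < (m:ℝ) * α i
        · have hdi : 0 < 2 * (m:ℝ) * α i - lam := by nlinarith [mul_pos hM0 (hα i)]
          have hu1 : 0 < lam * S1 / (2 * (m:ℝ) * α i - lam) := by positivity
          have huu : (lam * S1 / (2 * (m:ℝ) * α i - lam)) * S2
              = (lam * S2 / (2 * (m:ℝ) * α i - lam)) * S1 := by
            field_simp
          have e1 : hfun m lam α q Q S1 i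
              = min (Q i) (max (q i) (lam * S1 / (2 * (m:ℝ) * α i - lam))) := by
            unfold hfun; rw [if_pos hci]
          have e2 : hfun m lam α q Q S2 i
              = min (Q i) (max (q i) (lam * S2 / (2 * (m:ℝ) * α i - lam))) := by
            unfold hfun; rw [if_pos hci]
          rw [e1, e2]
          exact clamp_le _ _ _ _ _ _ (hq i) (hqQ i) hS1 hS12 hu1 huu
        · have e1 : hfun m lam α q Q S1 i = Q i := by unfold hfun; rw [if_neg hci]
          have e2 : hfun m lam α q Q S2 i = Q i := by unfold hfun; rw [if_neg hci]
          rw [e1, e2]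
          nlinarith [mul_pos (hQ0 i) (sub_pos.mpr hS12)]
      have hstrict : hfun m lam α q Q S2 i₁ * S1 < hfun m lam α q Q S1 i₁ * S2 := by
        by_cases hci : lam < (m:ℝ) * α i₁
        · have hne := hi₁ hci
          have hdi : 0 < 2 * (m:ℝ) * α i₁ - lam := by nlinarith [mul_pos hM0 (hα i₁)]
          have hu1 : 0 < lam * S1 / (2 * (m:ℝ) * α i₁ - lam) := by positivity
          have huu : (lam * S1 / (2 * (m:ℝ) * α i₁ - lam)) * S2
              = (lam * S2 / (2 * (m:ℝ) * α i₁ - lam)) * S1 := by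
            field_simp
          have e1 : hfun m lam α q Q S1 i₁
              = min (Q i₁) (max (q i₁) (lam * S1 / (2 * (m:ℝ) * α i₁ - lam))) := by
            unfold hfun; rw [if_pos hci]
          have e2 : hfun m lam α q Q S2 i₁
              = min (Q i₁) (max (q i₁) (lam * S2 / (2 * (m:ℝ) * α i₁ - lam))) := by
            unfold hfun; rw [if_pos hci]
          have hclamp : lam * S1 / (2 * (m:ℝ) * α i₁ - lam) < q i₁ ∨
              Q i₁ < lam * S1 / (2 * (m:ℝ) * α i₁ - lam) := by
            by_contra hcl
            push_neg at hcl
            exact hne (by rw [e1, max_eq_right hcl.1, min_eq_right hcl.2])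
          rw [e1, e2]
          exact clamp_lt _ _ _ _ _ _ (hq i₁) (hqQ i₁) hS1 hS12 hu1 huu hclamp
        · have e1 : hfun m lam α q Q S1 i₁ = Q i₁ := by unfold hfun; rw [if_neg hci]
          have e2 : hfun m lam α q Q S2 i₁ = Q i₁ := by unfold hfun; rw [if_neg hci]
          rw [e1, e2]
          nlinarith [mul_pos (hQ0 i₁) (sub_pos.mpr hS12)]
      have hlt : S2 * S1 < S1 * S2 := by
        calc S2 * S1 = (∑ i, hfun m lam α q Q S2 i) * S1 := by rw [hF2]
          _ = ∑ i, hfun m lam α q Q S2 i * S1 := by rw [Finset.sum_mul]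
          _ < ∑ i, hfun m lam α q Q S1 i * S2 :=
              Finset.sum_lt_sum (fun i _ => hweak i) ⟨i₁, Finset.mem_univ i₁, hstrict⟩
          _ = (∑ i, hfun m lam α q Q S1 i) * S2 := by rw [Finset.sum_mul]
          _ = S1 * S2 := by rw [hF1]
      nlinarith [hlt]
  -- basic facts about any NE
  have hfixS : ∀ s : Fin m → ℝ, isNE m lam α q Q s →
      (∑ i, hfun m lam α q Q (∑ j, s j) i) = (∑ j, s j) ∧
      (∀ i, s i = hfun m lam α q Q (∑ j, s j) i) ∧
      0 < ∑ j, s j ∧ (∑ j, s j) ≤ ∑ i, Q i := by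
    intro s hs
    obtain ⟨hb, hch⟩ := (isNE_iff hm2 hlam0 hα hq hqQ s).mp hs
    refine ⟨?_, hch, ?_, ?_⟩
    · exact (Finset.sum_congr rfl (fun i _ => (hch i).symm))
    · exact Finset.sum_pos (fun i _ => lt_of_lt_of_le (hq i) (hb i).1) Finset.univ_nonempty
    · exact Finset.sum_le_sum (fun i _ => (hb i).2)
  -- existence of a fixed point via IVT
  have hqsum : 0 < ∑ i, q i := Finset.sum_pos (fun i _ => hq i) Finset.univ_nonempty
  have hqQsum : (∑ i, q i) ≤ ∑ i, Q i := Finset.sum_le_sum (fun i _ => hqQ i)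
  obtain ⟨S₀, hS₀mem, hS₀⟩ : ∃ S₀ ∈ Set.Icc (∑ i, q i) (∑ i, Q i),
      (∑ i, hfun m lam α q Q S₀ i) = S₀ := by
    have hcont : ContinuousOn (fun S => (∑ i, hfun m lam α q Q S i) - S)
        (Set.Icc (∑ i, q i) (∑ i, Q i)) := by
      apply Continuous.continuousOn
      apply Continuous.sub _ continuous_id
      apply continuous_finset_sum
      intro i _
      unfold hfun
      split_ifs
      · fun_prop
      · exact continuous_const
    have hlow : (∑ i, q i) ≤ ∑ i, hfun m lam α q Q (∑ i, q i) i :=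
      Finset.sum_le_sum (fun i _ => (hfun_mem _ i (hqQ i)).1)
    have hhigh : (∑ i, hfun m lam α q Q (∑ i, Q i) i) ≤ ∑ i, Q i :=
      Finset.sum_le_sum (fun i _ => (hfun_mem _ i (hqQ i)).2)
    have hsub := intermediate_value_Icc' hqQsum hcont
    have h0 : (0:ℝ) ∈ Set.Icc ((∑ i, hfun m lam α q Q (∑ i, Q i) i) - ∑ i, Q i)
        ((∑ i, hfun m lam α q Q (∑ i, q i) i) - ∑ i, q i) := ⟨by linarith, by linarith⟩
    obtain ⟨S₀, hmem, heq⟩ := hsub h0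
    have heq' : (∑ i, hfun m lam α q Q S₀ i) - S₀ = 0 := heq
    exact ⟨S₀, hmem, by linarith⟩
  have hS₀pos : 0 < S₀ := lt_of_lt_of_le hqsum hS₀mem.1
  -- the NE
  have hsum_star : ∑ j, (fun i => hfun m lam α q Q S₀ i) j = S₀ := hS₀
  have hNEstar : isNE m lam α q Q (fun i => hfun m lam α q Q S₀ i) := by
    apply (isNE_iff hm2 hlam0 hα hq hqQ _).mpr
    refine ⟨fun j => hfun_mem _ _ (hqQ j), fun i => ?_⟩
    rw [hsum_star]
  have huniq : ∀ s : Fin m → ℝ, isNE m lam α q Q s →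
      s = fun i => hfun m lam α q Q S₀ i := by
    intro s hs
    obtain ⟨hfix, hch, hpos, _⟩ := hfixS s hs
    have hSeq : ∑ j, s j = S₀ := by
      rcases lt_trichotomy (∑ j, s j) S₀ with h | h | h
      · exact (hkey _ _ hpos h hfix hS₀).elim
      · exact h
      · exact (hkey _ _ hS₀pos h hS₀ hfix).elim
    funext i
    rw [hch i, hSeq]
  refine ⟨⟨fun i => hfun m lam α q Q S₀ i, hNEstar, huniq⟩, ?_⟩
  -- Part 2: the average exceeds c₂
  intro s hs
  obtain ⟨hfix, hch, hSpos, hSle⟩ := hfixS s hs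
  by_contra hcon
  push_neg at hcon
  have hQle : ∀ j, lamstar * (∑ i, s i) ≤ (2 * (m:ℝ) * α j - lamstar) * Q j := by
    intro j
    have h2 : (∑ i, s i) / (m:ℝ) ≤ 2 * α j * Q j / lamstar - Q j / (m:ℝ) :=
      le_trans hcon (hc₂.2 ⟨j, rfl⟩)
    have hml : (0:ℝ) < (m:ℝ) * lamstar := mul_pos hM0 hls0
    have h3 := mul_le_mul_of_nonneg_right h2 hml.le
    have e1 : (∑ i, s i) / (m:ℝ) * ((m:ℝ) * lamstar) = lamstar * (∑ i, s i) := by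
      field_simp
    have e2 : (2 * α j * Q j / lamstar - Q j / (m:ℝ)) * ((m:ℝ) * lamstar)
        = (2 * (m:ℝ) * α j - lamstar) * Q j := by
      field_simp
    linarith [h3, e1, e2]
  have hdq : ∀ j, 0 < 2 * (m:ℝ) * α j - lamstar := by
    intro j; nlinarith [hlsai j, mul_pos hM0 (hα j)]
  have hlower : ∀ j, (∑ i, s i) * (lamstar / (2 * (m:ℝ) * α j - lamstar)) ≤ s j := by
    intro j
    rw [mul_comm, div_mul_eq_mul_div, div_le_iff₀ (hdq j)]
    by_cases hcj : lam < (m:ℝ) * α j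
    · have hdj : 0 < 2 * (m:ℝ) * α j - lam := by nlinarith [mul_pos hM0 (hα j)]
      have e1 : s j = min (Q j) (max (q j) (lam * (∑ j', s j') / (2 * (m:ℝ) * α j - lam))) := by
        rw [hch j]; unfold hfun; rw [if_pos hcj]
      rcases min_cases (Q j) (max (q j) (lam * (∑ j', s j') / (2 * (m:ℝ) * α j - lam)))
        with ⟨hmin, _⟩ | ⟨hmin, hle⟩
      · rw [e1, hmin]
        nlinarith [hQle j]
      · rw [e1, hmin]
        have hx : lamstar * (∑ i, s i) * (2 * (m:ℝ) * α j - lam)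
            ≤ lam * (∑ i, s i) * (2 * (m:ℝ) * α j - lamstar) := by
          nlinarith [mul_nonneg (mul_nonneg hSpos.le (mul_pos hM0 (hα j)).le)
            (sub_nonneg.mpr hlam1.le)]
        have hu : lamstar * (∑ i, s i)
            ≤ (lam * (∑ i, s i) / (2 * (m:ℝ) * α j - lam)) * (2 * (m:ℝ) * α j - lamstar) := by
          rw [div_mul_eq_mul_div, le_div_iff₀ hdj]
          nlinarith [hx]
        calc lamstar * (∑ i, s i) ≤ _ := hu
          _ ≤ max (q j) (lam * (∑ j', s j') / (2 * (m:ℝ) * α j - lam))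
                * (2 * (m:ℝ) * α j - lamstar) :=
              mul_le_mul_of_nonneg_right (le_max_right _ _) (hdq j).le
    · have e1 : s j = Q j := by rw [hch j]; unfold hfun; rw [if_neg hcj]
      rw [e1]
      nlinarith [hQle j]
  have hstrict0 : (∑ i, s i) * (lamstar / (2 * (m:ℝ) * α i0 - lamstar)) < s i0 := by
    rw [mul_comm, div_mul_eq_mul_div, div_lt_iff₀ (hdq i0)]
    have hdj : 0 < 2 * (m:ℝ) * α i0 - lam := by nlinarith [mul_pos hM0 (hα i0)]
    have e1 : s i0 = min (Q i0) (max (q i0) (lam * (∑ j', s j') / (2 * (m:ℝ) * α i0 - lam))) := by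
      rw [hch i0]; unfold hfun; rw [if_pos hconc0]
    rcases le_or_gt (lam * (∑ j', s j') / (2 * (m:ℝ) * α i0 - lam)) (Q i0) with hu | hu
    · have hsge : lam * (∑ j', s j') / (2 * (m:ℝ) * α i0 - lam) ≤ s i0 := by
        rw [e1]; exact le_min hu (le_max_right _ _)
      have hx : lamstar * (∑ i, s i) * (2 * (m:ℝ) * α i0 - lam)
          < lam * (∑ i, s i) * (2 * (m:ℝ) * α i0 - lamstar) := by
        nlinarith [mul_pos (mul_pos hSpos (mul_pos hM0 (hα i0))) (sub_pos.mpr hlam1)]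
      have hu' : lamstar * (∑ i, s i)
          < (lam * (∑ i, s i) / (2 * (m:ℝ) * α i0 - lam)) * (2 * (m:ℝ) * α i0 - lamstar) := by
        rw [div_mul_eq_mul_div, lt_div_iff₀ hdj]
        nlinarith [hx]
      calc lamstar * (∑ i, s i) < _ := hu'
        _ ≤ s i0 * (2 * (m:ℝ) * α i0 - lamstar) :=
            mul_le_mul_of_nonneg_right hsge (hdq i0).le
    · exfalso
      have h5 : Q i0 * (2 * (m:ℝ) * α i0 - lam) < lam * (∑ j', s j') :=
        (lt_div_iff₀ hdj).mp hu
      have h6 : lam * (∑ j', s j') ≤ lam * (∑ i, Q i) :=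
        mul_le_mul_of_nonneg_left hSle hlam0.le
      nlinarith [hsat]
  have hsum_lt : ∑ i, (∑ i', s i') * (lamstar / (2 * (m:ℝ) * α i - lamstar)) < ∑ i, s i :=
    Finset.sum_lt_sum (fun i _ => hlower i) ⟨i0, Finset.mem_univ i0, hstrict0⟩
  have hfact : ∑ i, (∑ i', s i') * (lamstar / (2 * (m:ℝ) * α i - lamstar))
      = (∑ i', s i') * ∑ i, lamstar / (2 * (m:ℝ) * α i - lamstar) := by
    rw [Finset.mul_sum]
  rw [hfact, hlseq, mul_one] at hsum_lt
  exact lt_irrefl _ hsum_lt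
end

section
/- Let Γ be a w-potential game with potential P satisfying the regularity assumptions, and let {s^k}_{k≥0} be a best-response sequence. Then for every integer K ≥ 1 there exists k ∈ {1,…,K} such that s^k is an ε_K-Nash equilibrium with ε_K = L² (P* − P(s^0)) / (δ α_min K), where α_min = min_{i∈[m]} α_i, δ = min_{i∈[m]} α_i/w_i, and P* is the maximum value of P over S. -/
/-!
A best response maximizes a strongly concave function, so by the first-order condition the
mover gains at least `α i / 2` times her squared step, and the potential at least `δ / 2` times
it. Summed over a round, the squared length `Q` of round `k` is at most `2 / δ` times its
potential gain; these gains telescope to at most `P* - P(s⁰)`, so some round among the first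
`K` has `Q ≤ 2 (P* - P(s⁰)) / (δ K)`. At the end of that round, each player's strategy is an
exact best response to a profile differing from `s^{k+1}` in the players after her only, so the
Lipschitz gradient makes it satisfy the first-order condition at `s^{k+1}` up to `L √Q`, and
strong concavity turns this into a Nash gap of at most `L² Q / (2 α_min)`.
-/

open Finset Filter

/-- A best-response sequence: at stage `k+1`, players sequentially update,
player `i` best-responding to the already-updated strategies of players `j < i`
and the previous strategies of players `j > i`. -/
def IsBRSeq {m d : ℕ} (S : Fin m → Set (EuclideanSpace ℝ (Fin d)))
    (Pay : Fin m → (Fin m → EuclideanSpace ℝ (Fin d)) → ℝ)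
    (s : ℕ → Fin m → EuclideanSpace ℝ (Fin d)) : Prop :=
  (∀ i, s 0 i ∈ S i) ∧
  ∀ k : ℕ, ∀ i : Fin m,
    s (k + 1) i ∈ S i ∧
    ∀ x ∈ S i,
      Pay i (Function.update (fun j => if (j : ℕ) < (i : ℕ) then s (k + 1) j else s k j) i x) ≤
      Pay i (Function.update (fun j => if (j : ℕ) < (i : ℕ) then s (k + 1) j else s k j) i
        (s (k + 1) i))

open Function RealInnerProductSpace Set Topology

section StrongConcavity

variable {E : Type*} [NormedAddCommGroup E] [InnerProductSpace ℝ E] [CompleteSpace E]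
  {S : Set E} {f : E → ℝ} {g g' x y : E} {a : ℝ}

theorem inner_gradient_nonpos_of_isMaxOn (hS : Convex ℝ S) (hx : x ∈ S) (hy : y ∈ S)
    (hf : HasGradientAt f g y) (hmax : IsMaxOn f S y) : ⟪g, x - y⟫ ≤ 0 := by
  simpa using hmax.localize.hasFDerivWithinAt_nonpos hf.hasFDerivAt.hasFDerivWithinAt
    (sub_mem_posTangentConeAt_of_segment_subset (hS.segment_subset hy hx))

theorem StrongConcaveOn.add_sq_le_of_hasGradientAt (hf : StrongConcaveOn S a f)
    (hx : x ∈ S) (hy : y ∈ S) (hg : HasGradientAt f g y) :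
    f x + a / 2 * ‖x - y‖ ^ 2 ≤ f y + ⟪g, x - y⟫ := by
  set v := x - y
  have hslope : Tendsto (fun t : ℝ ↦ t⁻¹ • (f (y + t • v) - f y)) (𝓝[>] 0) (𝓝 ⟪g, v⟫) := by
    simpa using (hg.hasFDerivAt.hasLineDerivAt v).tendsto_slope_zero_right
  have hlower : Tendsto (fun t : ℝ ↦ f x - f y + (1 - t) * (a / 2 * ‖v‖ ^ 2)) (𝓝[>] 0)
      (𝓝 (f x - f y + a / 2 * ‖v‖ ^ 2)) := by
    have : Continuous (fun t : ℝ ↦ f x - f y + (1 - t) * (a / 2 * ‖v‖ ^ 2)) := by fun_prop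
    simpa using this.continuousWithinAt.tendsto (x := 0) (s := Ioi 0)
  have hle : f x - f y + a / 2 * ‖v‖ ^ 2 ≤ ⟪g, v⟫ := by
    refine le_of_tendsto_of_tendsto hlower hslope ?_
    filter_upwards [Ioo_mem_nhdsGT (zero_lt_one' ℝ)] with t ⟨ht0, ht1⟩
    have hchord := hf.2 hx hy ht0.le (sub_nonneg.2 ht1.le) (add_sub_cancel t 1)
    have hpt : t • x + (1 - t) • y = y + t • v := by module
    rw [hpt, smul_eq_mul, smul_eq_mul] at hchord
    rw [smul_eq_mul, le_inv_mul_iff₀ ht0]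
    nlinarith
  linarith

theorem StrongConcaveOn.add_sq_le_of_isMaxOn (hf : StrongConcaveOn S a f)
    (hx : x ∈ S) (hy : y ∈ S) (hg : HasGradientAt f g y) (hmax : IsMaxOn f S y) :
    f x + a / 2 * ‖x - y‖ ^ 2 ≤ f y := by
  linarith [hf.add_sq_le_of_hasGradientAt hx hy hg,
    inner_gradient_nonpos_of_isMaxOn hf.1 hx hy hg hmax]

theorem StrongConcaveOn.le_add_sq_div_of_inner_nonpos (hf : StrongConcaveOn S a f) (ha : 0 < a)
    (hx : x ∈ S) (hy : y ∈ S) (hg : HasGradientAt f g y) (hg' : ⟪g', x - y⟫ ≤ 0) :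
    f x ≤ f y + ‖g - g'‖ ^ 2 / (2 * a) := by
  have hcs : ⟪g - g', x - y⟫ ≤ ‖g - g'‖ * ‖x - y‖ := real_inner_le_norm _ _
  have hamgm : ‖g - g'‖ * ‖x - y‖ - a / 2 * ‖x - y‖ ^ 2 ≤ ‖g - g'‖ ^ 2 / (2 * a) := by
    rw [le_div_iff₀ (by positivity)]
    nlinarith [sq_nonneg (‖g - g'‖ - a * ‖x - y‖)]
  linarith [hf.add_sq_le_of_hasGradientAt hx hy hg, inner_sub_left (𝕜 := ℝ) g g' (x - y)]

end StrongConcavity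

section PartialUpdate

variable {m : ℕ} {α : Type*} (p q : Fin m → α)

/-- In round `k` of `IsBRSeq`, player `i` responds to `partialUpdate (s k) (s (k + 1)) i`. -/
def partialUpdate (n : ℕ) : Fin m → α := fun j ↦ if (j : ℕ) < n then q j else p j

@[simp]
theorem partialUpdate_zero : partialUpdate p q 0 = p := by
  ext j
  simp [partialUpdate]

theorem partialUpdate_of_le {n : ℕ} (h : m ≤ n) : partialUpdate p q n = q := by
  ext j
  simp [partialUpdate, j.isLt.trans_le h]

@[simp]
theorem partialUpdate_apply_self (i : Fin m) : partialUpdate p q i i = p i := by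
  simp [partialUpdate]

@[simp]
theorem partialUpdate_succ_apply_self (i : Fin m) : partialUpdate p q (i + 1) i = q i := by
  simp [partialUpdate]

theorem update_partialUpdate_succ (i : Fin m) (x : α) :
    update (partialUpdate p q (i + 1)) i x = update (partialUpdate p q i) i x := by
  ext j
  rcases eq_or_ne j i with rfl | hji
  · simp
  · simp [hji, partialUpdate, le_iff_lt_or_eq, Fin.val_ne_of_ne hji]

theorem update_partialUpdate_eq_succ (i : Fin m) :
    update (partialUpdate p q i) i (q i) = partialUpdate p q (i + 1) := by
  rw [← update_partialUpdate_succ, ← partialUpdate_succ_apply_self p q i, update_eq_self]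

variable {p q}

theorem partialUpdate_mem {S : Fin m → Set α} (hp : ∀ j, p j ∈ S j) (hq : ∀ j, q j ∈ S j)
    (n : ℕ) (j : Fin m) : partialUpdate p q n j ∈ S j := by
  unfold partialUpdate
  split_ifs
  exacts [hq j, hp j]

theorem norm_sub_partialUpdate_le {E : Type*} [SeminormedAddGroup E] (p q : Fin m → E)
    (n : ℕ) (j : Fin m) : ‖q j - partialUpdate p q n j‖ ≤ ‖q j - p j‖ := by
  unfold partialUpdate
  split_ifs <;> simp

end PartialUpdate

theorem exists_lt_sub_le_div {u : ℕ → ℝ} {K : ℕ} {M : ℝ} (hK : 0 < K) (hM : u K ≤ M) :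
    ∃ k < K, u (k + 1) - u k ≤ (M - u 0) / K := by
  have hsum : ∑ k ∈ Finset.range K, (u (k + 1) - u k) ≤ ∑ _k ∈ Finset.range K, (M - u 0) / K := by
    rw [Finset.sum_range_sub, Finset.sum_const, Finset.card_range, nsmul_eq_mul,
      mul_div_cancel₀ _ (Nat.cast_ne_zero.2 hK.ne')]
    linarith
  simpa using Finset.exists_le_of_sum_le (Finset.nonempty_range_iff.2 hK.ne') hsum

section PotentialGame

variable {E : Type*} [NormedAddCommGroup E] [InnerProductSpace ℝ E] [CompleteSpace E] {m : ℕ}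
  {S : Fin m → Set E} {Pay : Fin m → (Fin m → E) → ℝ} {gradP : Fin m → (Fin m → E) → E}
  {P : (Fin m → E) → ℝ} {α w : Fin m → ℝ} {p q : Fin m → E}

theorem potential_gain_of_isMaxOn
    (hconc : ∀ (i : Fin m) (s : Fin m → E), (∀ j, s j ∈ S j) →
      StrongConcaveOn (S i) (α i) (fun x => Pay i (update s i x)))
    (hgrad : ∀ (i : Fin m) (s : Fin m → E), (∀ j, s j ∈ S j) →
      HasGradientAt (fun x => Pay i (update s i x)) (gradP i s) (s i))
    (hpot : ∀ (i : Fin m) (s : Fin m → E), (∀ j, s j ∈ S j) → ∀ x ∈ S i,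
      Pay i s - Pay i (update s i x) = w i * (P s - P (update s i x)))
    {i : Fin m} (hp : ∀ j, p j ∈ S j) {y : E} (hy : y ∈ S i)
    (hmax : IsMaxOn (fun x => Pay i (update p i x)) (S i) y) :
    α i / 2 * ‖p i - y‖ ^ 2 ≤ w i * (P (update p i y) - P p) := by
  have hpy : ∀ j, update p i y j ∈ S j :=
    (forall_update_iff _ fun j x ↦ x ∈ S j).2 ⟨hy, fun j _ ↦ hp j⟩
  have hg := hgrad i (update p i y) hpy
  have hw := hpot i (update p i y) hpy (p i) (hp i)
  simp only [update_idem, update_self, update_eq_self] at hg hw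
  have hgrowth := (hconc i p hp).add_sq_le_of_isMaxOn (hp i) hy hg hmax
  simp only [update_eq_self] at hgrowth
  linarith

theorem potential_gain_of_round
    (hconc : ∀ (i : Fin m) (s : Fin m → E), (∀ j, s j ∈ S j) →
      StrongConcaveOn (S i) (α i) (fun x => Pay i (update s i x)))
    (hgrad : ∀ (i : Fin m) (s : Fin m → E), (∀ j, s j ∈ S j) →
      HasGradientAt (fun x => Pay i (update s i x)) (gradP i s) (s i))
    (hpot : ∀ (i : Fin m) (s : Fin m → E), (∀ j, s j ∈ S j) → ∀ x ∈ S i,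
      Pay i s - Pay i (update s i x) = w i * (P s - P (update s i x)))
    (hw : ∀ i, 0 < w i) {δ : ℝ} (hδ : ∀ i, δ ≤ α i / w i)
    (hp : ∀ j, p j ∈ S j) (hq : ∀ j, q j ∈ S j)
    (hbr : ∀ i, IsMaxOn (fun x => Pay i (update (partialUpdate p q i) i x)) (S i) (q i)) :
    δ / 2 * ∑ j, ‖q j - p j‖ ^ 2 ≤ P q - P p := by
  have hstep (i : Fin m) :
      δ / 2 * ‖q i - p i‖ ^ 2 ≤ P (partialUpdate p q (i + 1)) - P (partialUpdate p q i) := by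
    have h := potential_gain_of_isMaxOn hconc hgrad hpot (partialUpdate_mem hp hq i) (hq i) (hbr i)
    rw [partialUpdate_apply_self, update_partialUpdate_eq_succ] at h
    calc δ / 2 * ‖q i - p i‖ ^ 2 ≤ α i / w i / 2 * ‖q i - p i‖ ^ 2 := by gcongr; exact hδ i
      _ = (α i / 2 * ‖p i - q i‖ ^ 2) / w i := by rw [norm_sub_rev]; ring
      _ ≤ _ := by rw [div_le_iff₀' (hw i)]; exact h
  calc δ / 2 * ∑ j, ‖q j - p j‖ ^ 2 = ∑ i, δ / 2 * ‖q i - p i‖ ^ 2 := Finset.mul_sum _ _ _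
    _ ≤ ∑ i : Fin m, (P (partialUpdate p q (i + 1)) - P (partialUpdate p q i)) :=
      Finset.sum_le_sum fun i _ ↦ hstep i
    _ = P q - P p := by
      rw [Fin.sum_univ_eq_sum_range
          (fun n ↦ P (partialUpdate p q (n + 1)) - P (partialUpdate p q n)),
        Finset.sum_range_sub (fun n ↦ P (partialUpdate p q n)), partialUpdate_zero,
        partialUpdate_of_le p q le_rfl]

theorem nashGap_le_of_round
    (hconc : ∀ (i : Fin m) (s : Fin m → E), (∀ j, s j ∈ S j) →
      StrongConcaveOn (S i) (α i) (fun x => Pay i (update s i x)))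
    (hgrad : ∀ (i : Fin m) (s : Fin m → E), (∀ j, s j ∈ S j) →
      HasGradientAt (fun x => Pay i (update s i x)) (gradP i s) (s i))
    {L : ℝ} (hLip : ∀ (i : Fin m) (s s' : Fin m → E), (∀ j, s j ∈ S j) → (∀ j, s' j ∈ S j) →
      ‖gradP i s - gradP i s'‖ ≤ L * Real.sqrt (∑ j, ‖s j - s' j‖ ^ 2))
    (hα : ∀ i, 0 < α i) (hp : ∀ j, p j ∈ S j) (hq : ∀ j, q j ∈ S j)
    (hbr : ∀ i, IsMaxOn (fun x => Pay i (update (partialUpdate p q i) i x)) (S i) (q i))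
    {i : Fin m} {x : E} (hx : x ∈ S i) :
    Pay i (update q i x) ≤ Pay i q + L ^ 2 * (∑ j, ‖q j - p j‖ ^ 2) / (2 * α i) := by
  set p' := partialUpdate p q (i + 1)
  have hp' := partialUpdate_mem hp hq (i + 1)
  -- `q i` is the exact best response against `p'`, which differs from `q` only in players `j > i`
  have hfoc : ⟪gradP i p', x - q i⟫ ≤ 0 := by
    have hg := hgrad i p' hp'
    simp only [p', partialUpdate_succ_apply_self, update_partialUpdate_succ] at hg
    exact inner_gradient_nonpos_of_isMaxOn (hconc i _ hp).1 hx (hq i) hg (hbr i)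
  have hlip : ‖gradP i q - gradP i p'‖ ^ 2 ≤ L ^ 2 * ∑ j, ‖q j - p j‖ ^ 2 :=
    calc ‖gradP i q - gradP i p'‖ ^ 2 ≤ (L * √(∑ j, ‖q j - p' j‖ ^ 2)) ^ 2 :=
          pow_le_pow_left₀ (norm_nonneg _) (hLip i q p' hq hp') 2
      _ = L ^ 2 * ∑ j, ‖q j - p' j‖ ^ 2 := by rw [mul_pow, Real.sq_sqrt (by positivity)]
      _ ≤ L ^ 2 * ∑ j, ‖q j - p j‖ ^ 2 := by
          gcongr with j; exact norm_sub_partialUpdate_le p q _ j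
  have h := (hconc i q hq).le_add_sq_div_of_inner_nonpos (hα i) hx (hq i) (hgrad i q hq) hfoc
  rw [update_eq_self] at h
  exact h.trans (by have := hα i; gcongr)

end PotentialGame

section IsBRSeq

variable {m d : ℕ} {S : Fin m → Set (EuclideanSpace ℝ (Fin d))}
  {Pay : Fin m → (Fin m → EuclideanSpace ℝ (Fin d)) → ℝ}
  {s : ℕ → Fin m → EuclideanSpace ℝ (Fin d)}

theorem IsBRSeq.mem (hs : IsBRSeq S Pay s) (k : ℕ) (j : Fin m) : s k j ∈ S j := by
  cases k
  exacts [hs.1 j, (hs.2 _ j).1]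

theorem IsBRSeq.isMaxOn (hs : IsBRSeq S Pay s) (k : ℕ) (i : Fin m) :
    IsMaxOn (fun x => Pay i (update (partialUpdate (s k) (s (k + 1)) i) i x)) (S i)
      (s (k + 1) i) :=
  isMaxOn_iff.2 (hs.2 k i).2

end IsBRSeq

theorem potential_game_BR_approximate_NE_general
    (m d : ℕ)
    (S : Fin m → Set (EuclideanSpace ℝ (Fin d)))
    (Pay : Fin m → (Fin m → EuclideanSpace ℝ (Fin d)) → ℝ)
    (α : Fin m → ℝ) (hα : ∀ i, 0 < α i)
    (hconc : ∀ (i : Fin m) (s : Fin m → EuclideanSpace ℝ (Fin d)), (∀ j, s j ∈ S j) →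
      StrongConcaveOn (S i) (α i) (fun x => Pay i (Function.update s i x)))
    (gradP : Fin m → (Fin m → EuclideanSpace ℝ (Fin d)) → EuclideanSpace ℝ (Fin d))
    (hgrad : ∀ (i : Fin m) (s : Fin m → EuclideanSpace ℝ (Fin d)), (∀ j, s j ∈ S j) →
      HasGradientAt (fun x => Pay i (Function.update s i x)) (gradP i s) (s i))
    (L : ℝ)
    (hLip : ∀ (i : Fin m) (s s' : Fin m → EuclideanSpace ℝ (Fin d)),
      (∀ j, s j ∈ S j) → (∀ j, s' j ∈ S j) →
      ‖gradP i s - gradP i s'‖ ≤ L * Real.sqrt (∑ j, ‖s j - s' j‖ ^ 2))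
    (w : Fin m → ℝ) (hw : ∀ i, 0 < w i)
    (P : (Fin m → EuclideanSpace ℝ (Fin d)) → ℝ)
    (hpot : ∀ (i : Fin m) (s : Fin m → EuclideanSpace ℝ (Fin d)), (∀ j, s j ∈ S j) →
      ∀ x ∈ S i,
      Pay i s - Pay i (Function.update s i x) = w i * (P s - P (Function.update s i x)))
    (αmin : ℝ) (hαmin : IsLeast (Set.range α) αmin)
    (δ : ℝ) (hδ : IsLeast (Set.range fun i => α i / w i) δ)
    (Pstar : ℝ) (hPstar : IsGreatest (P '' {s | ∀ j, s j ∈ S j}) Pstar)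
    (s : ℕ → Fin m → EuclideanSpace ℝ (Fin d)) (hs : IsBRSeq S Pay s) :
    ∀ K : ℕ, 1 ≤ K → ∃ k : ℕ, 1 ≤ k ∧ k ≤ K ∧
      ∀ i : Fin m, ∀ x ∈ S i,
        Pay i (Function.update (s k) i x) -
          L ^ 2 * (Pstar - P (s 0)) / (δ * αmin * K) ≤ Pay i (s k) := by
  intro K hK
  obtain ⟨k, hkK, hk⟩ :=
    exists_lt_sub_le_div (u := fun k ↦ P (s k)) hK (hPstar.2 ⟨s K, hs.mem K, rfl⟩)
  refine ⟨k + 1, by omega, by omega, fun i x hx ↦ ?_⟩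
  obtain ⟨i₀, hi₀⟩ := hαmin.1
  obtain ⟨i₁, hi₁⟩ := hδ.1
  have hαmin0 : 0 < αmin := hi₀ ▸ hα i₀
  have hδ0 : 0 < δ := hi₁ ▸ div_pos (hα i₁) (hw i₁)
  set Q := ∑ j, ‖s (k + 1) j - s k j‖ ^ 2
  have hgain : δ / 2 * Q ≤ P (s (k + 1)) - P (s k) :=
    potential_gain_of_round hconc hgrad hpot hw (fun i ↦ hδ.2 ⟨i, rfl⟩) (hs.mem k)
      (hs.mem (k + 1)) (hs.isMaxOn k)
  have hgap :=
    nashGap_le_of_round hconc hgrad hLip hα (hs.mem k) (hs.mem (k + 1)) (hs.isMaxOn k) hx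
  have hQ : Q ≤ 2 / δ * ((Pstar - P (s 0)) / K) := by
    rw [div_mul_eq_mul_div, le_div_iff₀ hδ0]
    linarith
  have hε : L ^ 2 * Q / (2 * α i) ≤ L ^ 2 * (Pstar - P (s 0)) / (δ * αmin * K) :=
    calc L ^ 2 * Q / (2 * α i) ≤ L ^ 2 * Q / (2 * αmin) := by
          have : 0 ≤ Q := by positivity
          gcongr; exact hαmin.2 ⟨i, rfl⟩
      _ ≤ L ^ 2 * (2 / δ * ((Pstar - P (s 0)) / K)) / (2 * αmin) := by gcongr
      _ = L ^ 2 * (Pstar - P (s 0)) / (δ * αmin * K) := by field_simp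
  linarith

/-- For every `K ≥ 1` some iterate `s^k`, `1 ≤ k ≤ K`, of a
best-response sequence is an `ε_K`-Nash equilibrium with
`ε_K = L² (P* − P(s⁰)) / (δ α_min K)`. -/
theorem potential_game_BR_approximate_NE
    (m d : ℕ) (hm : 1 ≤ m)
    (S : Fin m → Set (EuclideanSpace ℝ (Fin d)))
    (hSne : ∀ i, (S i).Nonempty) (hScpt : ∀ i, IsCompact (S i))
    (hScvx : ∀ i, Convex ℝ (S i))
    (Pay : Fin m → (Fin m → EuclideanSpace ℝ (Fin d)) → ℝ)
    (α : Fin m → ℝ) (hα : ∀ i, 0 < α i)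
    (hconc : ∀ (i : Fin m) (s : Fin m → EuclideanSpace ℝ (Fin d)), (∀ j, s j ∈ S j) →
      StrongConcaveOn (S i) (α i) (fun x => Pay i (Function.update s i x)))
    (gradP : Fin m → (Fin m → EuclideanSpace ℝ (Fin d)) → EuclideanSpace ℝ (Fin d))
    (hgrad : ∀ (i : Fin m) (s : Fin m → EuclideanSpace ℝ (Fin d)), (∀ j, s j ∈ S j) →
      HasGradientAt (fun x => Pay i (Function.update s i x)) (gradP i s) (s i))
    (L : ℝ) (hL : 0 < L)
    (hLip : ∀ (i : Fin m) (s s' : Fin m → EuclideanSpace ℝ (Fin d)),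
      (∀ j, s j ∈ S j) → (∀ j, s' j ∈ S j) →
      ‖gradP i s - gradP i s'‖ ≤ L * Real.sqrt (∑ j, ‖s j - s' j‖ ^ 2))
    (w : Fin m → ℝ) (hw : ∀ i, 0 < w i)
    (P : (Fin m → EuclideanSpace ℝ (Fin d)) → ℝ)
    (hpot : ∀ (i : Fin m) (s : Fin m → EuclideanSpace ℝ (Fin d)), (∀ j, s j ∈ S j) →
      ∀ x ∈ S i,
      Pay i s - Pay i (Function.update s i x) = w i * (P s - P (Function.update s i x)))
    (αmin : ℝ) (hαmin : IsLeast (Set.range α) αmin)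
    (δ : ℝ) (hδ : IsLeast (Set.range fun i => α i / w i) δ)
    (Pstar : ℝ) (hPstar : IsGreatest (P '' {s | ∀ j, s j ∈ S j}) Pstar)
    (s : ℕ → Fin m → EuclideanSpace ℝ (Fin d)) (hs : IsBRSeq S Pay s) :
    ∀ K : ℕ, 1 ≤ K → ∃ k : ℕ, 1 ≤ k ∧ k ≤ K ∧
      ∀ i : Fin m, ∀ x ∈ S i,
        Pay i (Function.update (s k) i x) -
          L ^ 2 * (Pstar - P (s 0)) / (δ * αmin * K) ≤ Pay i (s k) :=
  potential_game_BR_approximate_NE_general m d S Pay α hα hconc gradP hgrad L hLip w hw P hpot αmin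
    hαmin δ hδ Pstar hPstar s hs
end
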